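/- arXiv:1905.08656 — 3 statements merged into one kernel-verified Lean document; each statement's English description precedes it below -/
import Mathlib

section
/- Let 1 < r < ∞ and 1 ≤ p < ∞, and let (X_n) be a sequence of Banach spaces. Then the ℓ_r-direct sum X = (Σ ⊕ X_n)_{ℓ_r} has the p-sequentially Right property if and only if each X_n has the p-sequentially Right property. -/
open Filter Topology NormedSpace Bornology
open scoped ENNReal ContinuousMap ZeroAtInfty

/-- A sequence is weakly null. -/
def WeaklyNull {X : Type*} [NormedAddCommGroup X] [NormedSpace ℝ X] (x : ℕ → X) : Prop :=
  ∀ f : StrongDual ℝ X, Tendsto (fun n => f (x n)) atTop (𝓝 0)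

/-- A sequence is weakly `p`-summable; for `p = ∞` this means weakly null. -/
def WeaklyPSummable {X : Type*} [NormedAddCommGroup X] [NormedSpace ℝ X] (p : ℝ≥0∞)
    (x : ℕ → X) : Prop :=
  if p = ∞ then WeaklyNull x else ∀ f : StrongDual ℝ X, Memℓp (fun n => f (x n)) p

/-- A Dunford-Pettis subset of a Banach space: a bounded set on which every weakly null
sequence of functionals converges uniformly to zero. -/
def IsDunfordPettisSet {X : Type*} [NormedAddCommGroup X] [NormedSpace ℝ X] (A : Set X) : Prop :=
  IsBounded A ∧ ∀ f : ℕ → StrongDual ℝ X, WeaklyNull f →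
    Tendsto (fun n => ⨆ a : A, |f n a.1|) atTop (𝓝 0)

/-- A `p`-Right null sequence: weakly `p`-summable and a Dunford-Pettis set. -/
def PRightNull {X : Type*} [NormedAddCommGroup X] [NormedSpace ℝ X] (p : ℝ≥0∞)
    (x : ℕ → X) : Prop :=
  WeaklyPSummable p x ∧ IsDunfordPettisSet (Set.range x)

/-- A `p`-Right subset of the dual: every `p`-Right null sequence in `X` converges to `0`
uniformly on `K`. -/
def IsPRightSet {X : Type*} [NormedAddCommGroup X] [NormedSpace ℝ X] (p : ℝ≥0∞)
    (K : Set (StrongDual ℝ X)) : Prop :=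
  IsBounded K ∧ ∀ x : ℕ → X, PRightNull p x →
    Tendsto (fun n => ⨆ f : K, |f.1 (x n)|) atTop (𝓝 0)

/-- A `p`-Right* subset of `X`: every `p`-Right null sequence in `X*` converges to `0`
uniformly on `K`. -/
def IsPRightStarSet {X : Type*} [NormedAddCommGroup X] [NormedSpace ℝ X] (p : ℝ≥0∞)
    (K : Set X) : Prop :=
  IsBounded K ∧ ∀ f : ℕ → StrongDual ℝ X, PRightNull p f →
    Tendsto (fun n => ⨆ a : K, |f n a.1|) atTop (𝓝 0)

/-- A `p`-(V) subset of the dual. -/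
def IsPVSet {X : Type*} [NormedAddCommGroup X] [NormedSpace ℝ X] (p : ℝ≥0∞)
    (K : Set (StrongDual ℝ X)) : Prop :=
  IsBounded K ∧ ∀ x : ℕ → X, WeaklyPSummable p x →
    Tendsto (fun n => ⨆ f : K, |f.1 (x n)|) atTop (𝓝 0)

/-- A `p`-(V*) subset of `X`. -/
def IsPVStarSet {X : Type*} [NormedAddCommGroup X] [NormedSpace ℝ X] (p : ℝ≥0∞)
    (K : Set X) : Prop :=
  IsBounded K ∧ ∀ f : ℕ → StrongDual ℝ X, WeaklyPSummable p f →
    Tendsto (fun n => ⨆ a : K, |f n a.1|) atTop (𝓝 0)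

/-- A Dunford-Pettis `p`-convergent operator maps `p`-Right null sequences to norm
null sequences. -/
def DPpConvergent {X Y : Type*} [NormedAddCommGroup X] [NormedSpace ℝ X] [NormedAddCommGroup Y]
    [NormedSpace ℝ Y] (p : ℝ≥0∞) (T : X →L[ℝ] Y) : Prop :=
  ∀ x : ℕ → X, PRightNull p x → Tendsto (fun n => ‖T (x n)‖) atTop (𝓝 0)

/-- The adjoint of a bounded operator between normed spaces. -/
noncomputable def adjointOp {X Y : Type*} [NormedAddCommGroup X] [NormedSpace ℝ X]
    [NormedAddCommGroup Y] [NormedSpace ℝ Y] (T : X →L[ℝ] Y) : StrongDual ℝ Y →L[ℝ] StrongDual ℝ X :=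
  (ContinuousLinearMap.compL ℝ X Y ℝ).flip T

/-- Weak convergence of a sequence. -/
def WeaklyConvTo {X : Type*} [NormedAddCommGroup X] [NormedSpace ℝ X] (x : ℕ → X) (a : X) : Prop :=
  ∀ f : StrongDual ℝ X, Tendsto (fun n => f (x n)) atTop (𝓝 (f a))

/-- A relatively weakly compact set (sequentially): every sequence in `A` has a weakly
convergent subsequence with limit in the space. -/
def RelWeaklyCompact {X : Type*} [NormedAddCommGroup X] [NormedSpace ℝ X] (A : Set X) : Prop :=
  ∀ x : ℕ → X, (∀ n, x n ∈ A) →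
    ∃ a : X, ∃ φ : ℕ → ℕ, StrictMono φ ∧ WeaklyConvTo (fun n => x (φ n)) a

/-- A relatively weakly `q`-compact set: every sequence in `A` has a weakly `q`-convergent
subsequence with limit in the space. -/
def RelWeaklyQCompact {X : Type*} [NormedAddCommGroup X] [NormedSpace ℝ X] (q : ℝ≥0∞)
    (A : Set X) : Prop :=
  ∀ x : ℕ → X, (∀ n, x n ∈ A) →
    ∃ a : X, ∃ φ : ℕ → ℕ, StrictMono φ ∧ WeaklyPSummable q (fun n => x (φ n) - a)

/-- The `p`-sequentially Right property: every `p`-Right subset of the dual is relatively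
weakly compact. -/
def PSR (p : ℝ≥0∞) (X : Type*) [NormedAddCommGroup X] [NormedSpace ℝ X] : Prop :=
  ∀ K : Set (StrongDual ℝ X), IsPRightSet p K → RelWeaklyCompact K

/-- The `p`-sequentially Right* property: every `p`-Right* subset is relatively weakly
compact. -/
def PSRStar (p : ℝ≥0∞) (X : Type*) [NormedAddCommGroup X] [NormedSpace ℝ X] : Prop :=
  ∀ K : Set X, IsPRightStarSet p K → RelWeaklyCompact K

section Aux
open Finset

section A
variable {X Y : Type*} [NormedAddCommGroup X] [NormedSpace ℝ X]
  [NormedAddCommGroup Y] [NormedSpace ℝ Y]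

lemma adjointOp_apply (T : X →L[ℝ] Y) (f : StrongDual ℝ Y) : adjointOp T f = f.comp T := rfl

lemma weaklyNull_comp {x : ℕ → X} (hx : WeaklyNull x) (T : X →L[ℝ] Y) :
    WeaklyNull (fun n => T (x n)) := fun f => hx (f.comp T)

lemma weaklyPSummable_comp {p : ℝ≥0∞} {x : ℕ → X} (hx : WeaklyPSummable p x) (T : X →L[ℝ] Y) :
    WeaklyPSummable p (fun n => T (x n)) := by
  unfold WeaklyPSummable at hx ⊢
  split_ifs with h
  · exact weaklyNull_comp (by simpa [WeaklyPSummable, h] using hx) T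
  · rw [if_neg h] at hx
    exact fun f => hx (f.comp T)

lemma weaklyNull_adjoint {f : ℕ → StrongDual ℝ Y} (hf : WeaklyNull f) (T : X →L[ℝ] Y) :
    WeaklyNull (fun n => adjointOp T (f n)) :=
  fun G => hf (G.comp (adjointOp T))

/-- helper: sup over a set of reals of nonneg function -/
lemma real_iSup_nonneg' {ι : Sort*} {f : ι → ℝ} (h : ∀ i, 0 ≤ f i) : 0 ≤ ⨆ i, f i :=
  Real.iSup_nonneg h

lemma isDunfordPettisSet_image {A : Set X} (hA : IsDunfordPettisSet A) (T : X →L[ℝ] Y) :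
    IsDunfordPettisSet (T '' A) := by
  obtain ⟨hAb, hADP⟩ := hA
  obtain ⟨R, hR⟩ := (isBounded_iff_forall_norm_le).1 hAb
  refine ⟨T.lipschitz.isBounded_image hAb, ?_⟩
  intro f hf
  have h1 : Tendsto (fun n => ⨆ a : A, |adjointOp T (f n) a.1|) atTop (𝓝 0) :=
    hADP _ (weaklyNull_adjoint hf T)
  have key : ∀ n, (⨆ b : (T '' A), |f n b.1|) ≤ ⨆ a : A, |adjointOp T (f n) a.1| := by
    intro n
    refine Real.iSup_le (fun b => ?_) (Real.iSup_nonneg fun a => abs_nonneg _)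
    obtain ⟨a, ha, hab⟩ := b.2
    have : |f n b.1| = |adjointOp T (f n) (⟨a, ha⟩ : A).1| := by
      simp [adjointOp_apply, hab.symm]
    rw [this]
    refine le_ciSup (f := fun a : A => |adjointOp T (f n) a.1|) ⟨‖f n‖ * ‖T‖ * R, ?_⟩ (⟨a, ha⟩ : A)
    rintro y ⟨a', rfl⟩
    calc |adjointOp T (f n) a'.1| ≤ ‖adjointOp T (f n)‖ * ‖a'.1‖ := (adjointOp T (f n)).le_opNorm _
    _ ≤ ‖f n‖ * ‖T‖ * R := by
        refine mul_le_mul ?_ (hR _ a'.2) (norm_nonneg _) (by positivity)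
        simpa [adjointOp_apply] using ((f n).opNorm_comp_le T)
  have h0 : ∀ n, 0 ≤ ⨆ b : (T '' A), |f n b.1| := fun n => Real.iSup_nonneg fun _ => abs_nonneg _
  exact tendsto_of_tendsto_of_tendsto_of_le_of_le tendsto_const_nhds h1 h0 key

lemma pRightNull_comp {p : ℝ≥0∞} {x : ℕ → X} (hx : PRightNull p x) (T : X →L[ℝ] Y) :
    PRightNull p (fun n => T (x n)) := by
  refine ⟨weaklyPSummable_comp hx.1 T, ?_⟩
  have := isDunfordPettisSet_image hx.2 T
  rwa [← Set.range_comp] at this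

lemma isPRightSet_adjoint_image {p : ℝ≥0∞} {K : Set (StrongDual ℝ Y)} (hK : IsPRightSet p K)
    (T : X →L[ℝ] Y) : IsPRightSet p (adjointOp T '' K) := by
  obtain ⟨hKb, hKu⟩ := hK
  obtain ⟨R, hR⟩ := (isBounded_iff_forall_norm_le).1 hKb
  refine ⟨(adjointOp T).lipschitz.isBounded_image hKb, ?_⟩
  intro x hx
  have h1 : Tendsto (fun n => ⨆ f : K, |f.1 (T (x n))|) atTop (𝓝 0) :=
    hKu _ (pRightNull_comp hx T)
  have key : ∀ n, (⨆ g : (adjointOp T '' K), |g.1 (x n)|) ≤ ⨆ f : K, |f.1 (T (x n))| := by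
    intro n
    refine Real.iSup_le (fun g => ?_) (Real.iSup_nonneg fun a => abs_nonneg _)
    obtain ⟨f, hf, hfg⟩ := g.2
    have : |g.1 (x n)| = |(⟨f, hf⟩ : K).1 (T (x n))| := by rw [← hfg]; rfl
    rw [this]
    refine le_ciSup (f := fun f' : K => |f'.1 (T (x n))|) ⟨R * ‖T (x n)‖, ?_⟩ (⟨f, hf⟩ : K)
    rintro y ⟨f', rfl⟩
    calc |f'.1 (T (x n))| ≤ ‖f'.1‖ * ‖T (x n)‖ := f'.1.le_opNorm _
    _ ≤ R * ‖T (x n)‖ := by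
        exact mul_le_mul_of_nonneg_right (hR _ f'.2) (norm_nonneg _)
  have h0 : ∀ n, 0 ≤ ⨆ g : (adjointOp T '' K), |g.1 (x n)| :=
    fun n => Real.iSup_nonneg fun _ => abs_nonneg _
  exact tendsto_of_tendsto_of_tendsto_of_le_of_le tendsto_const_nhds h1 h0 key

lemma weaklyConvTo_comp {x : ℕ → X} {a : X} (hx : WeaklyConvTo x a) (T : X →L[ℝ] Y) :
    WeaklyConvTo (fun n => T (x n)) (T a) := fun f => hx (f.comp T)

lemma weaklyConvTo_subseq {x : ℕ → X} {a : X} (hx : WeaklyConvTo x a) {ψ : ℕ → ℕ}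
    (hψ : StrictMono ψ) : WeaklyConvTo (fun n => x (ψ n)) a :=
  fun f => (hx f).comp hψ.tendsto_atTop

end A


lemma weaklyConvTo_subseq' {X : Type*} [NormedAddCommGroup X] [NormedSpace ℝ X]
    {x : ℕ → X} {a : X} (hx : WeaklyConvTo x a) {ψ : ℕ → ℕ}
    (hψ : StrictMono ψ) : WeaklyConvTo (fun n => x (ψ n)) a :=
  fun f => (hx f).comp hψ.tendsto_atTop

lemma diagonal_subseq {D : ℕ → Type*} [∀ n, NormedAddCommGroup (D n)] [∀ n, NormedSpace ℝ (D n)]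
    (v : ∀ n, ℕ → D n)
    (H : ∀ n (θ : ℕ → ℕ), StrictMono θ →
      ∃ a, ∃ ψ : ℕ → ℕ, StrictMono ψ ∧ WeaklyConvTo (fun k => v n (θ (ψ k))) a) :
    ∃ φ : ℕ → ℕ, StrictMono φ ∧ ∀ n, ∃ a, WeaklyConvTo (fun k => v n (φ k)) a := by
  have H' : ∀ n (θ : ℕ → ℕ), ∃ ψ : ℕ → ℕ, StrictMono θ →
      (StrictMono ψ ∧ ∃ a, WeaklyConvTo (fun k => v n (θ (ψ k))) a) := by
    intro n θ
    by_cases h : StrictMono θ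
    · obtain ⟨a, ψ, hψ, hc⟩ := H n θ h
      exact ⟨ψ, fun _ => ⟨hψ, a, hc⟩⟩
    · exact ⟨id, fun h' => absurd h' h⟩
  choose ψF hψF using H'
  set Θ : ℕ → (ℕ → ℕ) := fun n => Nat.rec (ψF 0 id) (fun n θ => θ ∘ ψF (n + 1) θ) n with hΘ
  have hΘ0 : Θ 0 = ψF 0 id := rfl
  have hΘs : ∀ n, Θ (n + 1) = Θ n ∘ ψF (n + 1) (Θ n) := fun n => rfl
  -- basic properties by induction
  have main : ∀ n, StrictMono (Θ n) ∧ ∀ m, m ≤ n → ∃ a,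
      WeaklyConvTo (fun k => v m (Θ n k)) a := by
    intro n
    induction n with
    | zero =>
      obtain ⟨h1, a, h2⟩ := hψF 0 id strictMono_id
      exact ⟨by rw [hΘ0]; exact h1, fun m hm => by
        interval_cases m
        exact ⟨a, by rw [hΘ0]; exact h2⟩⟩
    | succ n ih =>
      obtain ⟨hmono, hconv⟩ := ih
      obtain ⟨h1, a, h2⟩ := hψF (n + 1) (Θ n) hmono
      constructor
      · rw [hΘs n]; exact hmono.comp h1
      · intro m hm
        rcases Nat.lt_or_ge m (n + 1) with h | h
        · obtain ⟨b, hb⟩ := hconv m (Nat.lt_succ_iff.mp h)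
          exact ⟨b, by rw [hΘs n]; exact weaklyConvTo_subseq' hb h1⟩
        · have : m = n + 1 := le_antisymm hm h
          subst this
          exact ⟨a, by rw [hΘs n]; exact h2⟩
  have hpsi_mono : ∀ n, StrictMono (ψF (n + 1) (Θ n)) := fun n => (hψF _ _ (main n).1).1
  set φ : ℕ → ℕ := fun k => Θ k k with hφ
  have hφmono : StrictMono φ := by
    have step : ∀ k, φ k < φ (k + 1) := by
      intro k
      have h1 : Θ (k + 1) (k + 1) = Θ k (ψF (k + 1) (Θ k) (k + 1)) := by rw [hΘs k]; rfl
      have h2 : k + 1 ≤ ψF (k + 1) (Θ k) (k + 1) := (hpsi_mono k).id_le _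
      calc φ k = Θ k k := rfl
      _ < Θ k (k + 1) := (main k).1 (Nat.lt_succ_self k)
      _ ≤ Θ k (ψF (k + 1) (Θ k) (k + 1)) := (main k).1.monotone h2
      _ = φ (k + 1) := h1.symm
    exact strictMono_nat_of_lt_succ step
  -- linking
  have link : ∀ n k, n ≤ k → ∀ j, ∃ m, j ≤ m ∧ Θ k j = Θ n m := by
    intro n k hnk
    induction k, hnk using Nat.le_induction with
    | base => exact fun j => ⟨j, le_rfl, rfl⟩
    | succ k hnk ih =>
      intro j
      have hj : j ≤ ψF (k + 1) (Θ k) j := (hpsi_mono k).id_le _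
      obtain ⟨m, hm, hme⟩ := ih (ψF (k + 1) (Θ k) j)
      exact ⟨m, le_trans hj hm, by rw [hΘs k]; exact hme⟩
  refine ⟨φ, hφmono, fun n => ?_⟩
  obtain ⟨a, ha⟩ := (main n).2 n le_rfl
  refine ⟨a, fun f => ?_⟩
  have hlink : ∀ k, n ≤ k → ∃ m, k ≤ m ∧ φ k = Θ n m := by
    intro k hk
    obtain ⟨m, hm, hme⟩ := link n k hk k
    exact ⟨m, hm, hme⟩
  classical
  set χ : ℕ → ℕ := fun k => if h : n ≤ k then (hlink k h).choose else 0 with hχ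
  have hχ_ge : ∀ k, n ≤ k → k ≤ χ k := by
    intro k hk; rw [hχ]; simp only [dif_pos hk]; exact (hlink k hk).choose_spec.1
  have hχ_eq : ∀ k, n ≤ k → φ k = Θ n (χ k) := by
    intro k hk; rw [hχ]; simp only [dif_pos hk]; exact (hlink k hk).choose_spec.2
  have hχ_tendsto : Tendsto χ atTop atTop :=
    tendsto_atTop_mono' atTop (eventually_atTop.2 ⟨n, hχ_ge⟩) tendsto_id
  have h1 : Tendsto (fun k => f (v n (Θ n (χ k)))) atTop (𝓝 (f a)) := (ha f).comp hχ_tendsto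
  refine h1.congr' ?_
  filter_upwards [eventually_ge_atTop n] with k hk
  rw [hχ_eq k hk]


lemma exists_near_norming {Z : Type*} [NormedAddCommGroup Z] [NormedSpace ℝ Z]
    (g : StrongDual ℝ Z) {ε : ℝ} (hε : 0 < ε) :
    ∃ y : Z, ‖y‖ ≤ 1 ∧ 0 ≤ g y ∧ ‖g‖ - ε ≤ g y := by
  by_cases h : ‖g‖ ≤ ε
  · exact ⟨0, by simp, by simp, by simp; linarith⟩
  · push_neg at h
    have h2 : ‖g‖ - ε < ‖g‖ := by linarith
    obtain ⟨x, hx1, hx2⟩ := g.exists_lt_apply_of_lt_opNorm h2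
    rcases le_or_gt 0 (g x) with hx | hx
    · refine ⟨x, hx1.le, hx, ?_⟩
      rw [Real.norm_eq_abs, abs_of_nonneg hx] at hx2; linarith
    · refine ⟨-x, by simpa using hx1.le, by simpa using hx.le, ?_⟩
      rw [Real.norm_eq_abs, abs_of_neg hx] at hx2; simpa using hx2.le

lemma norm_sum_dual_le {Y : ℕ → Type*} [∀ n, NormedAddCommGroup (Y n)] [∀ n, NormedSpace ℝ (Y n)]
    {t t' : ℝ} (hc : t.HolderConjugate t')
    (g : ∀ n, StrongDual ℝ (Y n)) {C : ℝ} (hC : 0 ≤ C)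
    (H : ∀ (s : Finset ℕ) (y : ∀ n, Y n),
      |∑ n ∈ s, g n (y n)| ≤ C * (∑ n ∈ s, ‖y n‖ ^ t) ^ (1 / t)) :
    ∀ s : Finset ℕ, ∑ n ∈ s, ‖g n‖ ^ t' ≤ C ^ t' := by
  intro s
  set S : ℝ := ∑ n ∈ s, ‖g n‖ ^ t' with hS
  have hS0 : 0 ≤ S := Finset.sum_nonneg fun n _ => Real.rpow_nonneg (norm_nonneg _) _
  set c : ℕ → ℝ := fun n => ‖g n‖ ^ (t' - 1) with hc_def
  have hc0 : ∀ n, 0 ≤ c n := fun n => Real.rpow_nonneg (norm_nonneg _) _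
  set D : ℝ := ∑ n ∈ s, c n with hD
  have hD0 : 0 ≤ D := Finset.sum_nonneg fun n _ => hc0 n
  have hct : ∀ n, c n * ‖g n‖ = ‖g n‖ ^ t' := by
    intro n
    have : ‖g n‖ ^ t' = ‖g n‖ ^ (t' - 1) * ‖g n‖ ^ (1 : ℝ) := by
      rw [← Real.rpow_add' (norm_nonneg _) (by rw [sub_add_cancel]; exact hc.symm.ne_zero)]
      norm_num
    rw [this, Real.rpow_one]
  have hcpow : ∀ n, c n ^ t = ‖g n‖ ^ t' := by
    intro n
    rw [hc_def, ← Real.rpow_mul (norm_nonneg _), hc.symm.sub_one_mul_conj]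
  have key : ∀ ε : ℝ, 0 < ε → S ≤ C * S ^ (1 / t) + ε * D := by
    intro ε hε
    have hyn : ∀ n, ∃ y : Y n, ‖y‖ ≤ 1 ∧ 0 ≤ g n y ∧ ‖g n‖ - ε ≤ g n y :=
      fun n => exists_near_norming (g n) hε
    choose y hy1 hy2 hy3 using hyn
    have hH := H s (fun n => c n • y n)
    have hLHS : S - ε * D ≤ ∑ n ∈ s, (g n) (c n • y n) := by
      have : ∀ n ∈ s, c n * ‖g n‖ - ε * c n ≤ (g n) (c n • y n) := by
        intro n _
        rw [map_smul, smul_eq_mul]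
        have := mul_le_mul_of_nonneg_left (hy3 n) (hc0 n)
        nlinarith [hc0 n, hy3 n]
      calc S - ε * D = ∑ n ∈ s, (c n * ‖g n‖ - ε * c n) := by
            rw [Finset.sum_sub_distrib, ← Finset.mul_sum]
            congr 1
            exact Finset.sum_congr rfl fun n _ => (hct n).symm
      _ ≤ _ := Finset.sum_le_sum this
    have hRHS : (∑ n ∈ s, ‖c n • y n‖ ^ t) ^ (1 / t) ≤ S ^ (1 / t) := by
      refine Real.rpow_le_rpow (Finset.sum_nonneg fun n _ =>
        Real.rpow_nonneg (norm_nonneg _) _) ?_ hc.one_div_nonneg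
      refine Finset.sum_le_sum fun n _ => ?_
      rw [← hcpow n]
      refine Real.rpow_le_rpow (norm_nonneg _) ?_ hc.nonneg
      rw [norm_smul, Real.norm_eq_abs, abs_of_nonneg (hc0 n)]
      calc c n * ‖y n‖ ≤ c n * 1 := mul_le_mul_of_nonneg_left (hy1 n) (hc0 n)
      _ = c n := mul_one _
    have h1 : ∑ n ∈ s, (g n) (c n • y n) ≤ C * S ^ (1 / t) := by
      calc ∑ n ∈ s, (g n) (c n • y n) ≤ |∑ n ∈ s, (g n) (c n • y n)| := le_abs_self _
      _ ≤ C * (∑ n ∈ s, ‖c n • y n‖ ^ t) ^ (1 / t) := hH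
      _ ≤ C * S ^ (1 / t) := mul_le_mul_of_nonneg_left hRHS hC
    linarith
  have main : S ≤ C * S ^ (1 / t) := by
    by_contra h
    push_neg at h
    have hδ : 0 < (S - C * S ^ (1 / t)) / (D + 1) := by
      apply div_pos (by linarith) (by linarith)
    have := key _ hδ
    have hfrac : (S - C * S ^ (1 / t)) / (D + 1) * D < S - C * S ^ (1 / t) := by
      rw [div_mul_eq_mul_div, div_lt_iff₀ (by linarith)]
      nlinarith
    linarith
  rcases eq_or_lt_of_le hS0 with h0 | hSpos
  · rw [← h0]; exact Real.rpow_nonneg hC _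
  · have hsplit : S ^ (1 / t) * S ^ (1 / t') = S := by
      rw [← Real.rpow_add hSpos]
      rw [one_div, one_div, hc.inv_add_inv_eq_one, Real.rpow_one]
    have hpos : 0 < S ^ (1 / t) := Real.rpow_pos_of_pos hSpos _
    have h2 : S ^ (1 / t') ≤ C := by
      have : S ^ (1 / t) * S ^ (1 / t') ≤ C * S ^ (1 / t) := by rw [hsplit]; exact main
      rw [mul_comm (C : ℝ) _] at this
      exact le_of_mul_le_mul_left this hpos
    calc S = (S ^ (1 / t')) ^ t' := by
          rw [← Real.rpow_mul hS0, one_div, inv_mul_cancel₀ hc.symm.ne_zero, Real.rpow_one]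
    _ ≤ C ^ t' := Real.rpow_le_rpow (Real.rpow_nonneg hS0 _) h2 hc.symm.nonneg


section Hold

/-- Hölder for tsum, from finite partial sum bounds. -/
lemma holder_tsum {a b : ℕ → ℝ} (ha : ∀ n, 0 ≤ a n) (hb : ∀ n, 0 ≤ b n) {t t' : ℝ}
    (hc : t.HolderConjugate t') {A B : ℝ} (hA : 0 ≤ A) (hB : 0 ≤ B)
    (hA' : ∀ s : Finset ℕ, ∑ n ∈ s, a n ^ t ≤ A ^ t)
    (hB' : ∀ s : Finset ℕ, ∑ n ∈ s, b n ^ t' ≤ B ^ t') :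
    Summable (fun n => a n * b n) ∧ (∑' n, a n * b n) ≤ A * B := by
  have key : ∀ s : Finset ℕ, ∑ n ∈ s, a n * b n ≤ A * B := by
    intro s
    have h1 : ∑ n ∈ s, a n * b n ≤
        (∑ n ∈ s, |a n| ^ t) ^ (1 / t) * (∑ n ∈ s, |b n| ^ t') ^ (1 / t') :=
      Real.inner_le_Lp_mul_Lq s a b hc
    have e1 : (∑ n ∈ s, |a n| ^ t) = ∑ n ∈ s, a n ^ t := by
      refine Finset.sum_congr rfl fun n _ => by rw [abs_of_nonneg (ha n)]
    have e2 : (∑ n ∈ s, |b n| ^ t') = ∑ n ∈ s, b n ^ t' := by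
      refine Finset.sum_congr rfl fun n _ => by rw [abs_of_nonneg (hb n)]
    rw [e1, e2] at h1
    have h2 : (∑ n ∈ s, a n ^ t) ^ (1 / t) ≤ A := by
      calc (∑ n ∈ s, a n ^ t) ^ (1 / t) ≤ (A ^ t) ^ (1 / t) :=
            Real.rpow_le_rpow (Finset.sum_nonneg fun n _ =>
              Real.rpow_nonneg (ha n) _) (hA' s) hc.one_div_nonneg
      _ = A := by rw [← Real.rpow_mul hA, mul_one_div, div_self hc.ne_zero, Real.rpow_one]
    have h3 : (∑ n ∈ s, b n ^ t') ^ (1 / t') ≤ B := by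
      calc (∑ n ∈ s, b n ^ t') ^ (1 / t') ≤ (B ^ t') ^ (1 / t') :=
            Real.rpow_le_rpow (Finset.sum_nonneg fun n _ =>
              Real.rpow_nonneg (hb n) _) (hB' s) hc.symm.one_div_nonneg
      _ = B := by rw [← Real.rpow_mul hB, mul_one_div, div_self hc.symm.ne_zero, Real.rpow_one]
    calc ∑ n ∈ s, a n * b n ≤ _ := h1
    _ ≤ A * B := by
        refine mul_le_mul h2 h3 (Real.rpow_nonneg (Finset.sum_nonneg fun n _ =>
          Real.rpow_nonneg (hb n) _) _) hA
  have hsum : Summable (fun n => a n * b n) :=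
    summable_of_sum_le (fun n => mul_nonneg (ha n) (hb n)) key
  exact ⟨hsum, Summable.tsum_le_of_sum_le hsum key⟩

end Hold

section LpOps

variable {E : ℕ → Type} [∀ i, NormedAddCommGroup (E i)] [∀ i, NormedSpace ℝ (E i)]
variable {r : ℝ≥0∞} [Fact (1 ≤ r)]

lemma lp_single_add (hr0 : 0 < r.toReal) (n : ℕ) (a b : E n) :
    lp.single r n (a + b) = lp.single r n a + lp.single r n b := by
  refine lp.ext (funext fun j => ?_)
  by_cases h : j = n
  · subst h; simp [lp.single_apply_self, lp.coeFn_add]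
  · simp [lp.single_apply_ne r n _ h, lp.coeFn_add,
      lp.single_apply_ne r n (a := a) h, lp.single_apply_ne r n (a := b) h]

lemma lp_norm_single' (hr0 : 0 < r.toReal) (n : ℕ) (a : E n) : ‖lp.single r n a‖ = ‖a‖ := by
  exact lp.norm_single (p := r) (ENNReal.toReal_pos_iff.mp hr0).1 n a

/-- `lp.single` as a continuous linear map. -/
noncomputable def singleCLM (hr0 : 0 < r.toReal) (n : ℕ) : E n →L[ℝ] lp E r :=
  LinearMap.mkContinuous
    { toFun := fun a => lp.single r n a
      map_add' := lp_single_add hr0 n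
      map_smul' := fun c a => by simp [lp.single_smul] }
    1 (fun a => by simp only [LinearMap.coe_mk, AddHom.coe_mk]; rw [lp_norm_single' hr0, one_mul])

@[simp] lemma singleCLM_apply (hr0 : 0 < r.toReal) (n : ℕ) (a : E n) :
    singleCLM (E := E) hr0 n a = lp.single r n a := rfl

/-- coordinate projection as a continuous linear map. -/
noncomputable def projCLM (hr0 : 0 < r.toReal) (n : ℕ) : lp E r →L[ℝ] E n :=
  LinearMap.mkContinuous
    { toFun := fun x => x n
      map_add' := fun x y => by rw [lp.coeFn_add]; rfl
      map_smul' := fun c x => by rw [lp.coeFn_smul]; rfl }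
    1 (fun x => by
      rw [one_mul]
      exact lp.norm_apply_le_norm (by
        intro h; rw [h] at hr0; simp at hr0) x n)

@[simp] lemma projCLM_apply (hr0 : 0 < r.toReal) (n : ℕ) (x : lp E r) :
    projCLM (E := E) hr0 n x = x n := rfl

lemma projCLM_comp_singleCLM (hr0 : 0 < r.toReal) (n : ℕ) :
    (projCLM (E := E) hr0 n).comp (singleCLM hr0 n) = ContinuousLinearMap.id ℝ (E n) := by
  ext a
  simp [lp.single_apply_self]

end LpOps


section TailGeneric

lemma summable_rpow_shift {a : ℕ → ℝ} {t : ℝ} (h : Summable (fun n => a n ^ t)) (N : ℕ) :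
    Summable (fun n => a (n + N) ^ t) :=
  h.comp_injective (add_left_injective N)

lemma tail_bound_generic {u a b : ℕ → ℝ} (ha : ∀ n, 0 ≤ a n) (hb : ∀ n, 0 ≤ b n)
    (hab : ∀ n, |u n| ≤ a n * b n) {t t' : ℝ} (hc : t.HolderConjugate t')
    {A B : ℝ} (hA : 0 ≤ A) (hB : 0 ≤ B)
    (hA' : ∀ s : Finset ℕ, ∑ n ∈ s, a n ^ t ≤ A ^ t)
    (hB' : ∀ s : Finset ℕ, ∑ n ∈ s, b n ^ t' ≤ B ^ t')
    {L : ℝ} (hL : Tendsto (fun N => ∑ n ∈ Finset.range N, u n) atTop (𝓝 L)) (N : ℕ) :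
    |L - ∑ n ∈ Finset.range N, u n| ≤ (∑' n, a (n + N) ^ t) ^ (1 / t) * B := by
  have hprod : Summable (fun n => a n * b n) ∧ (∑' n, a n * b n) ≤ A * B :=
    holder_tsum ha hb hc hA hB hA' hB'
  have hu_norm : Summable (fun n => ‖u n‖) := by
    refine Summable.of_nonneg_of_le (fun n => norm_nonneg _) (fun n => ?_) hprod.1
    rw [Real.norm_eq_abs]; exact hab n
  have hu : Summable u := hu_norm.of_norm
  have hLt : L = ∑' n, u n := by
    have := hu.hasSum.tendsto_sum_nat
    exact tendsto_nhds_unique hL this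
  have hid : L - ∑ n ∈ Finset.range N, u n = ∑' n, u (n + N) := by
    have h2 := Summable.sum_add_tsum_nat_add (f := u) N hu
    rw [hLt]; linarith
  rw [hid]
  -- summability of shifted pieces
  have hat : Summable (fun n => a n ^ t) :=
    summable_of_sum_le (fun n => Real.rpow_nonneg (ha n) _) hA'
  have hatN : Summable (fun n => a (n + N) ^ t) := summable_rpow_shift hat N
  set AN : ℝ := (∑' n, a (n + N) ^ t) ^ (1 / t) with hAN
  have hτ0 : 0 ≤ ∑' n, a (n + N) ^ t :=
    tsum_nonneg fun n => Real.rpow_nonneg (ha _) _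
  have hAN0 : 0 ≤ AN := Real.rpow_nonneg hτ0 _
  have hA'' : ∀ s : Finset ℕ, ∑ n ∈ s, a (n + N) ^ t ≤ AN ^ t := by
    intro s
    have : AN ^ t = ∑' n, a (n + N) ^ t := by
      rw [hAN, ← Real.rpow_mul hτ0, one_div, inv_mul_cancel₀ hc.ne_zero, Real.rpow_one]
    rw [this]
    exact Summable.sum_le_tsum s (fun n _ => Real.rpow_nonneg (ha _) _) hatN
  have hB'' : ∀ s : Finset ℕ, ∑ n ∈ s, b (n + N) ^ t' ≤ B ^ t' := by
    intro s
    have := hB' (s.map ⟨fun n => n + N, add_left_injective N⟩)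
    rwa [Finset.sum_map] at this
  have hshift := holder_tsum (fun n => ha _) (fun n => hb _) hc hAN0 hB hA'' hB''
  calc |∑' n, u (n + N)| ≤ ∑' n, ‖u (n + N)‖ := by
        rw [← Real.norm_eq_abs]
        exact norm_tsum_le_tsum_norm (hu_norm.comp_injective (add_left_injective N))
  _ ≤ ∑' n, a (n + N) * b (n + N) := by
      refine Summable.tsum_le_tsum (fun n => ?_) (hu_norm.comp_injective (add_left_injective N)) hshift.1
      rw [Real.norm_eq_abs]; exact hab _
  _ ≤ AN * B := hshift.2

end TailGeneric

section DualLp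
open Finset

variable {E : ℕ → Type} [∀ i, NormedAddCommGroup (E i)] [∀ i, NormedSpace ℝ (E i)]
variable {r : ℝ≥0∞} [Fact (1 ≤ r)]

lemma norm_sum_single' (hr0 : 0 < r.toReal) (y : ∀ i, E i) (s : Finset ℕ) :
    ‖∑ n ∈ s, lp.single r n (y n)‖ = (∑ n ∈ s, ‖y n‖ ^ r.toReal) ^ (1 / r.toReal) := by
  have h := lp.norm_sum_single (p := r) hr0 y s
  rw [← h, ← Real.rpow_mul (norm_nonneg _), mul_one_div, div_self hr0.ne', Real.rpow_one]

lemma dual_pairing_bound (hr0 : 0 < r.toReal) (f : StrongDual ℝ (lp E r)) (s : Finset ℕ)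
    (y : ∀ n, E n) :
    |∑ n ∈ s, (f.comp (singleCLM hr0 n)) (y n)|
      ≤ ‖f‖ * (∑ n ∈ s, ‖y n‖ ^ r.toReal) ^ (1 / r.toReal) := by
  have he : ∑ n ∈ s, (f.comp (singleCLM hr0 n)) (y n) = f (∑ n ∈ s, lp.single r n (y n)) := by
    rw [map_sum]; rfl
  rw [he, ← norm_sum_single' hr0 y s, ← Real.norm_eq_abs]
  exact f.le_opNorm _

lemma sum_norm_dualCoord_le (hr1 : 1 < r.toReal) (f : StrongDual ℝ (lp E r)) (s : Finset ℕ) :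
    ∑ n ∈ s, ‖f.comp (singleCLM (zero_lt_one.trans hr1) n)‖ ^ r.toReal.conjExponent
      ≤ ‖f‖ ^ r.toReal.conjExponent :=
  norm_sum_dual_le (Real.HolderConjugate.conjExponent hr1)
    (fun n => f.comp (singleCLM (zero_lt_one.trans hr1) n)) (norm_nonneg f)
    (fun s y => dual_pairing_bound _ f s y) s

lemma summable_dualCoord (hr1 : 1 < r.toReal) (f : StrongDual ℝ (lp E r)) :
    Summable (fun n => ‖f.comp (singleCLM (zero_lt_one.trans hr1) n)‖ ^ r.toReal.conjExponent) :=
  summable_of_sum_le (fun n => Real.rpow_nonneg (norm_nonneg _) _)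
    (sum_norm_dualCoord_le hr1 f)

lemma coord_hasSum (hrt : r ≠ ∞) (f : StrongDual ℝ (lp E r)) (x : lp E r) :
    HasSum (fun n => f (lp.single r n (x n))) (f x) :=
  f.hasSum (lp.hasSum_single hrt x)

/-- tail functional norm bound for an element of the dual of an `lp`-sum -/
lemma dual_tail_bound (hr1 : 1 < r.toReal) (hrt : r ≠ ∞) (f : StrongDual ℝ (lp E r)) (x : lp E r)
    (N : ℕ) :
    |f x - ∑ n ∈ Finset.range N, f (lp.single r n (x n))|
      ≤ (∑' n, ‖f.comp (singleCLM (zero_lt_one.trans hr1) (n + N))‖ ^ r.toReal.conjExponent)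
          ^ (1 / r.toReal.conjExponent) * ‖x‖ := by
  have hc := (Real.HolderConjugate.conjExponent hr1).symm
  refine tail_bound_generic (a := fun n => ‖f.comp (singleCLM (zero_lt_one.trans hr1) n)‖)
    (b := fun n => ‖(x : ∀ i, E i) n‖) (fun n => norm_nonneg _) (fun n => norm_nonneg _)
    (fun n => ?_) hc (norm_nonneg f) (norm_nonneg x)
    (sum_norm_dualCoord_le hr1 f)
    (fun s => lp.sum_rpow_le_norm_rpow (zero_lt_one.trans hr1) x s)
    ((coord_hasSum hrt f x).tendsto_sum_nat) N
  rw [← Real.norm_eq_abs]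
  exact ((f.comp (singleCLM (zero_lt_one.trans hr1) n)).le_opNorm ((x : ∀ i, E i) n))

end DualLp

section DualLp2
open Finset

variable {E : ℕ → Type} [∀ i, NormedAddCommGroup (E i)] [∀ i, NormedSpace ℝ (E i)]
variable {r : ℝ≥0∞} [Fact (1 ≤ r)]

lemma dual_tail_norm (hr1 : 1 < r.toReal) (hrt : r ≠ ∞) (f : StrongDual ℝ (lp E r)) (N : ℕ) :
    ‖f - ∑ n ∈ Finset.range N,
        adjointOp (projCLM (zero_lt_one.trans hr1) n) (f.comp (singleCLM (zero_lt_one.trans hr1) n))‖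
      ≤ (∑' n, ‖f.comp (singleCLM (zero_lt_one.trans hr1) (n + N))‖ ^ r.toReal.conjExponent)
          ^ (1 / r.toReal.conjExponent) := by
  refine ContinuousLinearMap.opNorm_le_bound _
    (Real.rpow_nonneg (tsum_nonneg fun n => Real.rpow_nonneg (norm_nonneg _) _) _) fun x => ?_
  have he : (f - ∑ n ∈ Finset.range N,
      adjointOp (projCLM (zero_lt_one.trans hr1) n) (f.comp (singleCLM (zero_lt_one.trans hr1) n))) x
      = f x - ∑ n ∈ Finset.range N, f (lp.single r n (x n)) := by
    rw [ContinuousLinearMap.sub_apply, ContinuousLinearMap.sum_apply]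
    rfl
  rw [he, Real.norm_eq_abs]
  exact dual_tail_bound hr1 hrt f x N

lemma dual_tail_tendsto (hr1 : 1 < r.toReal) (f : StrongDual ℝ (lp E r)) :
    Tendsto (fun N => (∑' n,
        ‖f.comp (singleCLM (zero_lt_one.trans hr1) (n + N))‖ ^ r.toReal.conjExponent)
          ^ (1 / r.toReal.conjExponent)) atTop (𝓝 0) := by
  have hc := Real.HolderConjugate.conjExponent hr1
  have h1 : Tendsto (fun N => ∑' n,
      ‖f.comp (singleCLM (zero_lt_one.trans hr1) (n + N))‖ ^ r.toReal.conjExponent)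
      atTop (𝓝 0) :=
    tendsto_sum_nat_add fun n => ‖f.comp (singleCLM (zero_lt_one.trans hr1) n)‖ ^ r.toReal.conjExponent
  have h2 := h1.rpow_const (p := 1 / r.toReal.conjExponent) (Or.inr hc.symm.one_div_nonneg)
  rwa [Real.zero_rpow (ne_of_gt hc.symm.one_div_pos)] at h2

lemma trunc_tendsto (hr1 : 1 < r.toReal) (hrt : r ≠ ∞) (f : StrongDual ℝ (lp E r)) :
    Tendsto (fun N => ∑ n ∈ Finset.range N,
        adjointOp (projCLM (zero_lt_one.trans hr1) n) (f.comp (singleCLM (zero_lt_one.trans hr1) n)))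
      atTop (𝓝 f) := by
  rw [tendsto_iff_norm_sub_tendsto_zero]
  refine tendsto_of_tendsto_of_tendsto_of_le_of_le tendsto_const_nhds
    (dual_tail_tendsto hr1 f) (fun N => norm_nonneg _) (fun N => ?_)
  rw [norm_sub_rev]
  exact dual_tail_norm hr1 hrt f N

lemma norm_sum_adjProj_le (hr1 : 1 < r.toReal) (s : Finset ℕ) (y : ∀ n, StrongDual ℝ (E n)) :
    ‖∑ n ∈ s, adjointOp (projCLM (zero_lt_one.trans hr1) n) (y n)‖
      ≤ (∑ n ∈ s, ‖y n‖ ^ r.toReal.conjExponent) ^ (1 / r.toReal.conjExponent) := by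
  have hc := Real.HolderConjugate.conjExponent hr1
  refine ContinuousLinearMap.opNorm_le_bound _
    (Real.rpow_nonneg (Finset.sum_nonneg fun n _ => Real.rpow_nonneg (norm_nonneg _) _) _)
    fun x => ?_
  have he : (∑ n ∈ s, adjointOp (projCLM (zero_lt_one.trans hr1) n) (y n)) x
      = ∑ n ∈ s, y n (x n) := by
    rw [ContinuousLinearMap.sum_apply]; rfl
  rw [he]
  calc ‖∑ n ∈ s, y n (x n)‖ ≤ ∑ n ∈ s, ‖y n (x n)‖ := norm_sum_le _ _
  _ ≤ ∑ n ∈ s, ‖y n‖ * ‖(x : ∀ i, E i) n‖ :=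
      Finset.sum_le_sum fun n _ => (y n).le_opNorm _
  _ ≤ (∑ n ∈ s, |‖y n‖| ^ r.toReal.conjExponent) ^ (1 / r.toReal.conjExponent) *
        (∑ n ∈ s, |‖(x : ∀ i, E i) n‖| ^ r.toReal) ^ (1 / r.toReal) :=
      Real.inner_le_Lp_mul_Lq s _ _ hc.symm
  _ ≤ (∑ n ∈ s, ‖y n‖ ^ r.toReal.conjExponent) ^ (1 / r.toReal.conjExponent) * ‖x‖ := by
      simp only [abs_norm]
      refine mul_le_mul_of_nonneg_left ?_
        (Real.rpow_nonneg (Finset.sum_nonneg fun n _ => Real.rpow_nonneg (norm_nonneg _) _) _)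
      calc (∑ n ∈ s, ‖(x : ∀ i, E i) n‖ ^ r.toReal) ^ (1 / r.toReal)
          ≤ (‖x‖ ^ r.toReal) ^ (1 / r.toReal) :=
            Real.rpow_le_rpow (Finset.sum_nonneg fun n _ => Real.rpow_nonneg (norm_nonneg _) _)
              (lp.sum_rpow_le_norm_rpow (zero_lt_one.trans hr1) x s) hc.one_div_nonneg
      _ = ‖x‖ := by
          rw [← Real.rpow_mul (norm_nonneg _), mul_one_div, div_self hc.ne_zero, Real.rpow_one]

lemma sum_norm_bidual_le (hr1 : 1 < r.toReal) (F : StrongDual ℝ (StrongDual ℝ (lp E r))) (s : Finset ℕ) :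
    ∑ n ∈ s, ‖F.comp (adjointOp (projCLM (zero_lt_one.trans hr1) n))‖ ^ r.toReal
      ≤ ‖F‖ ^ r.toReal := by
  have hc := Real.HolderConjugate.conjExponent hr1
  refine norm_sum_dual_le hc.symm
    (fun n => F.comp (adjointOp (projCLM (zero_lt_one.trans hr1) n))) (norm_nonneg F)
    (fun s y => ?_) s
  have he : ∑ n ∈ s, (F.comp (adjointOp (projCLM (zero_lt_one.trans hr1) n))) (y n)
      = F (∑ n ∈ s, adjointOp (projCLM (zero_lt_one.trans hr1) n) (y n)) := by
    rw [map_sum]; rfl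
  rw [he, ← Real.norm_eq_abs]
  calc ‖F (∑ n ∈ s, adjointOp (projCLM (zero_lt_one.trans hr1) n) (y n))‖
      ≤ ‖F‖ * ‖∑ n ∈ s, adjointOp (projCLM (zero_lt_one.trans hr1) n) (y n)‖ := F.le_opNorm _
  _ ≤ ‖F‖ * (∑ n ∈ s, ‖y n‖ ^ r.toReal.conjExponent) ^ (1 / r.toReal.conjExponent) :=
      mul_le_mul_of_nonneg_left (norm_sum_adjProj_le hr1 s y) (norm_nonneg F)

lemma bidual_repr (hr1 : 1 < r.toReal) (hrt : r ≠ ∞) (F : StrongDual ℝ (StrongDual ℝ (lp E r)))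
    (f : StrongDual ℝ (lp E r)) :
    Tendsto (fun N => ∑ n ∈ Finset.range N,
        (F.comp (adjointOp (projCLM (zero_lt_one.trans hr1) n)))
          (f.comp (singleCLM (zero_lt_one.trans hr1) n))) atTop (𝓝 (F f)) := by
  have h1 := (F.continuous.tendsto f).comp (trunc_tendsto hr1 hrt f)
  refine h1.congr fun N => ?_
  simp only [Function.comp_apply, map_sum]
  rfl

lemma bidual_tail_bound (hr1 : 1 < r.toReal) (hrt : r ≠ ∞) (F : StrongDual ℝ (StrongDual ℝ (lp E r)))
    (h : StrongDual ℝ (lp E r)) (N : ℕ) :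
    |F h - ∑ n ∈ Finset.range N,
        (F.comp (adjointOp (projCLM (zero_lt_one.trans hr1) n)))
          (h.comp (singleCLM (zero_lt_one.trans hr1) n))|
      ≤ (∑' n, ‖F.comp (adjointOp (projCLM (zero_lt_one.trans hr1) (n + N)))‖ ^ r.toReal)
          ^ (1 / r.toReal) * ‖h‖ := by
  have hc := Real.HolderConjugate.conjExponent hr1
  refine tail_bound_generic
    (a := fun n => ‖F.comp (adjointOp (projCLM (zero_lt_one.trans hr1) n))‖)
    (b := fun n => ‖h.comp (singleCLM (zero_lt_one.trans hr1) n)‖)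
    (fun n => by positivity) (fun n => norm_nonneg _) (fun n => ?_) hc (norm_nonneg F)
    (norm_nonneg h) (sum_norm_bidual_le hr1 F) (sum_norm_dualCoord_le hr1 h)
    (bidual_repr hr1 hrt F h) N
  rw [← Real.norm_eq_abs]
  exact ContinuousLinearMap.le_opNorm _ _

lemma bidual_tail_tendsto (hr1 : 1 < r.toReal) (F : StrongDual ℝ (StrongDual ℝ (lp E r))) :
    Tendsto (fun N => (∑' n,
        ‖F.comp (adjointOp (projCLM (zero_lt_one.trans hr1) (n + N)))‖ ^ r.toReal)
          ^ (1 / r.toReal)) atTop (𝓝 0) := by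
  have hc := Real.HolderConjugate.conjExponent hr1
  have h1 : Tendsto (fun N => ∑' n,
      ‖F.comp (adjointOp (projCLM (zero_lt_one.trans hr1) (n + N)))‖ ^ r.toReal)
      atTop (𝓝 0) :=
    tendsto_sum_nat_add fun n =>
      ‖F.comp (adjointOp (projCLM (zero_lt_one.trans hr1) n))‖ ^ r.toReal
  have h2 := h1.rpow_const (p := 1 / r.toReal) (Or.inr hc.one_div_nonneg)
  rwa [Real.zero_rpow (ne_of_gt hc.one_div_pos)] at h2

end DualLp2

section Main
open Finset

variable {E : ℕ → Type} [∀ i, NormedAddCommGroup (E i)] [∀ i, NormedSpace ℝ (E i)]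
variable {r p : ℝ≥0∞} [Fact (1 ≤ r)]

lemma backward_construct (hr1 : 1 < r.toReal) {C : ℝ} (hC : 0 ≤ C) (a : ∀ n, StrongDual ℝ (E n))
    (ha : ∀ s : Finset ℕ, ∑ n ∈ s, ‖a n‖ ^ r.toReal.conjExponent ≤ C ^ r.toReal.conjExponent) :
    ∃ A : StrongDual ℝ (lp E r), ‖A‖ ≤ C ∧
      ∀ n, A.comp (singleCLM (zero_lt_one.trans hr1) n) = a n := by
  have hc := Real.HolderConjugate.conjExponent hr1
  have hr0 : 0 < r.toReal := zero_lt_one.trans hr1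
  have hold : ∀ x : lp E r, Summable (fun n => ‖a n‖ * ‖(x : ∀ i, E i) n‖) ∧
      (∑' n, ‖a n‖ * ‖(x : ∀ i, E i) n‖) ≤ C * ‖x‖ := fun x =>
    holder_tsum (fun n => norm_nonneg _) (fun n => norm_nonneg _) hc.symm hC (norm_nonneg x)
      ha (fun s => lp.sum_rpow_le_norm_rpow hr0 x s)
  have hsx : ∀ x : lp E r, Summable (fun n => ‖a n ((x : ∀ i, E i) n)‖) := by
    intro x
    exact Summable.of_nonneg_of_le (fun n => norm_nonneg _)
      (fun n => (a n).le_opNorm _) (hold x).1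
  have hsx' : ∀ x : lp E r, Summable (fun n => a n ((x : ∀ i, E i) n)) :=
    fun x => (hsx x).of_norm
  set L : lp E r →ₗ[ℝ] ℝ :=
    { toFun := fun x => ∑' n, a n ((x : ∀ i, E i) n)
      map_add' := by
        intro x y
        have hxy : ∀ n, a n (((x + y : lp E r) : ∀ i, E i) n)
            = a n ((x : ∀ i, E i) n) + a n ((y : ∀ i, E i) n) := by
          intro n
          rw [lp.coeFn_add]
          simp
        simp only [hxy]
        exact Summable.tsum_add (hsx' x) (hsx' y)
      map_smul' := by
        intro c x
        have hxy : ∀ n, a n (((c • x : lp E r) : ∀ i, E i) n)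
            = c * a n ((x : ∀ i, E i) n) := by
          intro n
          rw [lp.coeFn_smul]
          simp
        simp only [hxy, RingHom.id_apply, smul_eq_mul]
        exact tsum_mul_left } with hL
  have hbound : ∀ x : lp E r, ‖L x‖ ≤ C * ‖x‖ := by
    intro x
    calc ‖L x‖ ≤ ∑' n, ‖a n ((x : ∀ i, E i) n)‖ := norm_tsum_le_tsum_norm (hsx x)
    _ ≤ ∑' n, ‖a n‖ * ‖(x : ∀ i, E i) n‖ :=
        Summable.tsum_le_tsum (fun n => (a n).le_opNorm _) (hsx x) (hold x).1
    _ ≤ C * ‖x‖ := (hold x).2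
  refine ⟨LinearMap.mkContinuous L C hbound, LinearMap.mkContinuous_norm_le L hC hbound, ?_⟩
  intro n
  ext v
  show (∑' m, a m ((lp.single r n v : ∀ i, E i) m)) = a n v
  rw [tsum_eq_single n]
  · rw [lp.single_apply_self]
  · intro m hm
    rw [lp.single_apply_ne r n v hm, map_zero]

set_option maxHeartbeats 1000000 in
lemma backward_dir (hr1 : 1 < r.toReal) (hrt : r ≠ ∞) (h : ∀ n, PSR p (E n)) :
    PSR p (lp E r) := by
  have hc := Real.HolderConjugate.conjExponent hr1
  have hr0 : 0 < r.toReal := zero_lt_one.trans hr1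
  intro K hK f hf
  obtain ⟨C₀, hC₀⟩ := isBounded_iff_forall_norm_le.1 hK.1
  set C : ℝ := max C₀ 0 with hCdef
  have hC : 0 ≤ C := le_max_right _ _
  have hCK : ∀ g ∈ K, ‖g‖ ≤ C := fun g hg => (hC₀ g hg).trans (le_max_left _ _)
  have hRWC : ∀ n, RelWeaklyCompact (adjointOp (singleCLM (E := E) hr0 n) '' K) :=
    fun n => h n _ (isPRightSet_adjoint_image hK (singleCLM hr0 n))
  have hprem : ∀ n (θ : ℕ → ℕ), StrictMono θ →
      ∃ a, ∃ ψ : ℕ → ℕ, StrictMono ψ ∧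
        WeaklyConvTo (fun k => adjointOp (singleCLM (E := E) hr0 n) (f (θ (ψ k)))) a := by
    intro n θ hθ
    obtain ⟨a, ψ, hψ, hw⟩ := hRWC n (fun k => adjointOp (singleCLM hr0 n) (f (θ k)))
      (fun k => ⟨f (θ k), hf _, rfl⟩)
    exact ⟨a, ψ, hψ, hw⟩
  obtain ⟨φ, hφ, hconv⟩ := diagonal_subseq (D := fun n => StrongDual ℝ (E n))
    (v := fun n k => adjointOp (singleCLM (E := E) hr0 n) (f k)) hprem
  choose aa haa using hconv
  -- norm bound on the coordinate limits
  have haabound : ∀ s : Finset ℕ, ∑ n ∈ s, ‖aa n‖ ^ r.toReal.conjExponent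
      ≤ C ^ r.toReal.conjExponent := by
    refine norm_sum_dual_le hc aa hC (fun s y => ?_)
    have hlim : Tendsto (fun k => ∑ n ∈ s,
        (adjointOp (singleCLM (E := E) hr0 n) (f (φ k))) (y n)) atTop
        (𝓝 (∑ n ∈ s, aa n (y n))) := by
      refine tendsto_finset_sum s fun n _ => ?_
      exact haa n ((ContinuousLinearMap.apply ℝ ℝ) (y n))
    have hbd : ∀ k, |∑ n ∈ s,
        (adjointOp (singleCLM (E := E) hr0 n) (f (φ k))) (y n)|
        ≤ C * (∑ n ∈ s, ‖y n‖ ^ r.toReal) ^ (1 / r.toReal) := by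
      intro k
      calc |∑ n ∈ s, (adjointOp (singleCLM (E := E) hr0 n) (f (φ k))) (y n)|
          ≤ ‖f (φ k)‖ * (∑ n ∈ s, ‖y n‖ ^ r.toReal) ^ (1 / r.toReal) :=
            dual_pairing_bound hr0 (f (φ k)) s y
      _ ≤ C * (∑ n ∈ s, ‖y n‖ ^ r.toReal) ^ (1 / r.toReal) :=
          mul_le_mul_of_nonneg_right (hCK _ (hf _))
            (Real.rpow_nonneg (Finset.sum_nonneg fun n _ =>
              Real.rpow_nonneg (norm_nonneg _) _) _)
    exact le_of_tendsto hlim.abs (Eventually.of_forall hbd)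
  obtain ⟨A, hAnorm, hAcoord⟩ := backward_construct hr1 hC aa haabound
  refine ⟨A, φ, hφ, ?_⟩
  intro F
  rw [← tendsto_sub_nhds_zero_iff]
  have hmap : ∀ k, F (f (φ k)) - F A = F (f (φ k) - A) := fun k => (map_sub F _ _).symm
  simp only [hmap]
  set hh : ℕ → StrongDual ℝ (lp E r) := fun k => f (φ k) - A with hhdef
  have hhb : ∀ k, ‖hh k‖ ≤ C + C := by
    intro k
    calc ‖f (φ k) - A‖ ≤ ‖f (φ k)‖ + ‖A‖ := norm_sub_le _ _
    _ ≤ C + C := add_le_add (hCK _ (hf _)) hAnorm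
  have hcoordnull : ∀ n (G : StrongDual ℝ (StrongDual ℝ (E n))),
      Tendsto (fun k => G ((hh k).comp (singleCLM (E := E) hr0 n))) atTop (𝓝 0) := by
    intro n G
    have he : ∀ k, (hh k).comp (singleCLM (E := E) hr0 n)
        = adjointOp (singleCLM (E := E) hr0 n) (f (φ k)) - aa n := by
      intro k
      rw [hhdef]
      simp only []
      rw [ContinuousLinearMap.sub_comp]
      rw [← hAcoord n]
      rfl
    simp only [he, map_sub]
    have := (haa n G).sub_const (G (aa n))
    simpa using this
  rw [NormedAddCommGroup.tendsto_nhds_zero]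
  intro ε hε
  set D : ℝ := C + C with hDdef
  have hD : 0 ≤ D := by positivity
  -- choose N with small tail
  have htail := bidual_tail_tendsto hr1 F
  have hsmall : ∀ᶠ N in atTop, (∑' n,
      ‖F.comp (adjointOp (projCLM (E := E) hr0 (n + N)))‖ ^ r.toReal) ^ (1 / r.toReal)
      < ε / (2 * (D + 1)) := by
    refine (htail.eventually (gt_mem_nhds ?_))
    positivity
  obtain ⟨N, hN⟩ := hsmall.exists
  -- head tends to zero in k
  have hhead : Tendsto (fun k => ∑ n ∈ Finset.range N,
      (F.comp (adjointOp (projCLM (E := E) hr0 n))) ((hh k).comp (singleCLM (E := E) hr0 n)))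
      atTop (𝓝 0) := by
    have := tendsto_finset_sum (Finset.range N)
      (fun n _ => hcoordnull n (F.comp (adjointOp (projCLM (E := E) hr0 n))))
    simpa using this
  have hheadev : ∀ᶠ k in atTop, |∑ n ∈ Finset.range N,
      (F.comp (adjointOp (projCLM (E := E) hr0 n))) ((hh k).comp (singleCLM (E := E) hr0 n))|
      < ε / 2 := by
    have := (NormedAddCommGroup.tendsto_nhds_zero.1 hhead) (ε / 2) (by positivity)
    simpa [Real.norm_eq_abs] using this
  filter_upwards [hheadev] with k hk
  have h1 := bidual_tail_bound hr1 hrt F (hh k) N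
  have h2 : (∑' n, ‖F.comp (adjointOp (projCLM (E := E) hr0 (n + N)))‖ ^ r.toReal)
      ^ (1 / r.toReal) * ‖hh k‖ ≤ ε / (2 * (D + 1)) * D := by
    refine mul_le_mul hN.le (hhb k) (norm_nonneg _) (by positivity)
  have h3 : ε / (2 * (D + 1)) * D < ε / 2 := by
    rw [div_mul_eq_mul_div, mul_comm]
    rw [div_lt_div_iff₀ (by positivity) (by positivity)]
    nlinarith
  have h4 : |F (hh k)| ≤ |∑ n ∈ Finset.range N,
      (F.comp (adjointOp (projCLM (E := E) hr0 n))) ((hh k).comp (singleCLM (E := E) hr0 n))|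
      + |F (hh k) - ∑ n ∈ Finset.range N,
        (F.comp (adjointOp (projCLM (E := E) hr0 n))) ((hh k).comp (singleCLM (E := E) hr0 n))| := by
    have := abs_add_le (∑ n ∈ Finset.range N,
        (F.comp (adjointOp (projCLM (E := E) hr0 n))) ((hh k).comp (singleCLM (E := E) hr0 n)))
      (F (hh k) - ∑ n ∈ Finset.range N,
        (F.comp (adjointOp (projCLM (E := E) hr0 n))) ((hh k).comp (singleCLM (E := E) hr0 n)))
    simpa using this
  rw [Real.norm_eq_abs]
  calc |F (hh k)| ≤ _ + _ := h4
  _ < ε / 2 + ε / 2 := by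
      exact add_lt_add_of_lt_of_le hk ((h1.trans h2).trans_lt h3).le
  _ = ε := by ring

lemma forward_dir (hr1 : 1 < r.toReal) (h : PSR p (lp E r)) (n : ℕ) : PSR p (E n) := by
  have hr0 : 0 < r.toReal := zero_lt_one.trans hr1
  intro K hK g hg
  have hK' : IsPRightSet p (adjointOp (projCLM (E := E) hr0 n) '' K) :=
    isPRightSet_adjoint_image hK (projCLM hr0 n)
  obtain ⟨a, φ, hφ, hc⟩ := h _ hK' (fun k => adjointOp (projCLM (E := E) hr0 n) (g k))
    (fun k => ⟨g k, hg k, rfl⟩)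
  have hid : ∀ x : StrongDual ℝ (E n),
      adjointOp (singleCLM (E := E) hr0 n) (adjointOp (projCLM (E := E) hr0 n) x) = x := by
    intro x
    show (x.comp (projCLM (E := E) hr0 n)).comp (singleCLM hr0 n) = x
    rw [ContinuousLinearMap.comp_assoc, projCLM_comp_singleCLM, ContinuousLinearMap.comp_id]
  refine ⟨adjointOp (singleCLM (E := E) hr0 n) a, φ, hφ, ?_⟩
  have hcomp := weaklyConvTo_comp hc (adjointOp (singleCLM (E := E) hr0 n))
  simpa only [hid] using hcomp

end Main

end Aux

/-- for `1 < r < ∞` and `1 ≤ p < ∞`, the `ℓ_r`-direct sum of `(X_n)` has the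
`p`-sequentially Right property iff each `X_n` has it. -/
theorem stmt15 {p r : ℝ≥0∞} (hp : 1 ≤ p) (hp' : p < ∞) [Fact (1 ≤ r)] (hr : 1 < r)
    (hr' : r < ∞) (E : ℕ → Type) [∀ i, NormedAddCommGroup (E i)] [∀ i, NormedSpace ℝ (E i)]
    [∀ i, CompleteSpace (E i)] :
    PSR p (lp E r) ↔ ∀ n, PSR p (E n) := by
  have hr1 : 1 < r.toReal := by
    rw [← ENNReal.toReal_one]
    exact (ENNReal.toReal_lt_toReal (by simp) hr'.ne).2 hr
  exact ⟨fun h n => forward_dir hr1 h n, fun h => backward_dir hr1 hr'.ne h⟩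
end

section
/- Let 1 ≤ p < q ≤ ∞. A Banach space X has the (SR)_{p,q} property (every p-Right set in X* is a q-Right set) if and only if for every Banach space Y, every Dunford-Pettis p-convergent operator T : X → Y is Dunford-Pettis q-convergent; equivalently, it suffices to check Y = ℓ∞. -/
set_option synthInstance.maxHeartbeats 1000000
set_option maxHeartbeats 1000000


open Filter Topology NormedSpace Bornology
open scoped ENNReal ContinuousMap ZeroAtInfty

section Aux

variable {X : Type} [NormedAddCommGroup X] [NormedSpace ℝ X]

/-- The operator into `ℓ∞` built from a uniformly bounded sequence of functionals. -/
noncomputable def seqOp (f : ℕ → StrongDual ℝ X) (C : ℝ) (hC : ∀ n, ‖f n‖ ≤ C) :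
    X →L[ℝ] lp (fun _ : ℕ => ℝ) ∞ :=
  LinearMap.mkContinuous
    { toFun := fun x => ⟨fun n => f n x, memℓp_infty ⟨C * ‖x‖, by
        rintro - ⟨n, rfl⟩
        exact le_trans ((f n).le_opNorm x) (by gcongr; exact hC n)⟩⟩
      map_add' := fun x y => Subtype.ext (funext fun n => (f n).map_add x y)
      map_smul' := fun c x => Subtype.ext (funext fun n => (f n).map_smul c x) }
    C
    (fun x => lp.norm_le_of_forall_le (mul_nonneg (le_trans (norm_nonneg _) (hC 0)) (norm_nonneg x))
      (fun n => le_trans ((f n).le_opNorm x) (by gcongr; exact hC n)))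

theorem seqOp_apply (f : ℕ → StrongDual ℝ X) (C : ℝ) (hC : ∀ n, ‖f n‖ ≤ C) (x : X) (n : ℕ) :
    (seqOp f C hC x) n = f n x := rfl

end Aux

/-- for `1 ≤ p < q ≤ ∞`, `X` has the `(SR)_{p,q}` property (every `p`-Right
set in `X*` is a `q`-Right set) iff every Dunford-Pettis `p`-convergent operator from `X`
into any Banach space `Y` is Dunford-Pettis `q`-convergent; equivalently with `Y = ℓ∞`. -/


theorem stmt18 {p q : ℝ≥0∞} (hp : 1 ≤ p) (hpq : p < q) {X : Type} [NormedAddCommGroup X]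
    [NormedSpace ℝ X] [CompleteSpace X] :
    ((∀ K : Set (StrongDual ℝ X), IsPRightSet p K → IsPRightSet q K) ↔
      ∀ (Y : Type) (_ : NormedAddCommGroup Y) (_ : NormedSpace ℝ Y) (_ : CompleteSpace Y)
        (T : X →L[ℝ] Y), DPpConvergent p T → DPpConvergent q T) ∧
    ((∀ K : Set (StrongDual ℝ X), IsPRightSet p K → IsPRightSet q K) ↔
      ∀ T : X →L[ℝ] lp (fun _ : ℕ => ℝ) ∞, DPpConvergent p T → DPpConvergent q T) := by
  -- main direction 1: (SR)_{p,q} implies the operator characterization for any Banach Y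
  have main1 : (∀ K : Set (StrongDual ℝ X), IsPRightSet p K → IsPRightSet q K) →
      ∀ (Y : Type) (_ : NormedAddCommGroup Y) (_ : NormedSpace ℝ Y) (_ : CompleteSpace Y)
        (T : X →L[ℝ] Y), DPpConvergent p T → DPpConvergent q T := by
    intro hSR Y _ _ _ T hT x hx
    set K : Set (StrongDual ℝ Y) := Metric.closedBall 0 1 with hKdef
    set K' : Set (StrongDual ℝ X) := (fun g : StrongDual ℝ Y => g.comp T) '' K with hK'def
    have hK'bdd : IsBounded K' := by
      rw [isBounded_iff_forall_norm_le]
      refine ⟨‖T‖, ?_⟩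
      rintro - ⟨g, hg, rfl⟩
      calc ‖g.comp T‖ ≤ ‖g‖ * ‖T‖ := ContinuousLinearMap.opNorm_comp_le g T
        _ ≤ 1 * ‖T‖ := by
            gcongr
            simpa using mem_closedBall_zero_iff.mp hg
        _ = ‖T‖ := one_mul _
    have hbddA : ∀ z : X, BddAbove (Set.range fun f : K' => |f.1 z|) := by
      intro z
      refine ⟨‖T‖ * ‖z‖, ?_⟩
      rintro - ⟨⟨f, g, hg, rfl⟩, rfl⟩
      calc |(g.comp T) z| ≤ ‖g.comp T‖ * ‖z‖ := (g.comp T).le_opNorm z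
        _ ≤ (1 * ‖T‖) * ‖z‖ := by
            gcongr
            calc ‖g.comp T‖ ≤ ‖g‖ * ‖T‖ := ContinuousLinearMap.opNorm_comp_le g T
              _ ≤ 1 * ‖T‖ := by gcongr; simpa using mem_closedBall_zero_iff.mp hg
        _ = ‖T‖ * ‖z‖ := by ring
    have hK' : IsPRightSet p K' := by
      refine ⟨hK'bdd, ?_⟩
      intro y hy
      have h0 := hT y hy
      refine squeeze_zero (fun n => Real.iSup_nonneg fun f => abs_nonneg _) (fun n => ?_) h0
      refine Real.iSup_le (fun f => ?_) (norm_nonneg _)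
      obtain ⟨f, g, hg, rfl⟩ := f
      calc |(g.comp T) (y n)| = |g (T (y n))| := rfl
        _ ≤ ‖g‖ * ‖T (y n)‖ := by
            simpa using (g.le_opNorm (T (y n)))
        _ ≤ 1 * ‖T (y n)‖ := by gcongr; simpa using mem_closedBall_zero_iff.mp hg
        _ = ‖T (y n)‖ := one_mul _
    have hq := (hSR K' hK').2 x hx
    refine squeeze_zero (fun n => norm_nonneg _) (fun n => ?_) hq
    obtain ⟨g, hg1, hgx⟩ := exists_dual_vector'' ℝ (T (x n))
    have hgK : g ∈ K := by simpa [hKdef] using mem_closedBall_zero_iff.mpr hg1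
    have : ‖T (x n)‖ = |(g.comp T) (x n)| := by
      have : (g.comp T) (x n) = ‖T (x n)‖ := hgx
      rw [this, abs_of_nonneg (norm_nonneg _)]
    rw [this]
    exact le_ciSup (hbddA (x n)) (⟨g.comp T, g, hgK, rfl⟩ : K')
  -- main direction 2: the ℓ∞ operator characterization implies (SR)_{p,q}
  have main2 : (∀ T : X →L[ℝ] lp (fun _ : ℕ => ℝ) ∞, DPpConvergent p T → DPpConvergent q T) →
      ∀ K : Set (StrongDual ℝ X), IsPRightSet p K → IsPRightSet q K := by
    intro hop K hK
    refine ⟨hK.1, ?_⟩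
    intro x hx
    rcases K.eq_empty_or_nonempty with rfl | hKne
    · haveI : IsEmpty (∅ : Set (StrongDual ℝ X)) := by simp [Set.isEmpty_coe_sort]
      simpa [Real.iSup_of_isEmpty] using (tendsto_const_nhds :
        Tendsto (fun _ : ℕ => (0 : ℝ)) atTop (𝓝 0))
    · haveI : Nonempty K := hKne.to_subtype
      obtain ⟨C, hC⟩ := isBounded_iff_forall_norm_le.mp hK.1
      have hbddK : ∀ z : X, BddAbove (Set.range fun f : K => |f.1 z|) := by
        intro z
        refine ⟨C * ‖z‖, ?_⟩
        rintro - ⟨⟨f, hf⟩, rfl⟩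
        calc |f z| ≤ ‖f‖ * ‖z‖ := f.le_opNorm z
          _ ≤ C * ‖z‖ := by gcongr; exact hC f hf
      -- choose near-optimal functionals
      have hchoice : ∀ n : ℕ, ∃ f : K, (⨆ g : K, |g.1 (x n)|) - 1 / (n + 1) < |f.1 (x n)| := by
        intro n
        refine exists_lt_of_lt_ciSup ?_
        have : (0 : ℝ) < 1 / (n + 1) := by positivity
        exact sub_lt_self _ this
      choose f hf using hchoice
      have hfC : ∀ n, ‖(f n).1‖ ≤ C := fun n => hC _ (f n).2
      set T := seqOp (fun n => (f n).1) C hfC with hTdef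
      have hTp : DPpConvergent p T := by
        intro y hy
        have h0 := hK.2 y hy
        refine squeeze_zero (fun m => norm_nonneg _) (fun m => ?_) h0
        refine lp.norm_le_of_forall_le (Real.iSup_nonneg fun g => abs_nonneg _) (fun n => ?_)
        have : ‖(T (y m)) n‖ = |(f n).1 (y m)| := by
          rw [seqOp_apply]; rfl
        rw [this]
        exact le_ciSup (hbddK (y m)) (f n)
      have hq := hop T hTp x hx
      have hlim : Tendsto (fun n => ‖T (x n)‖ + 1 / (n + 1 : ℝ)) atTop (𝓝 0) := by
        simpa using hq.add tendsto_one_div_add_atTop_nhds_zero_nat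
      refine squeeze_zero (fun n => Real.iSup_nonneg fun g => abs_nonneg _) (fun n => ?_) hlim
      have h1 : |(f n).1 (x n)| ≤ ‖T (x n)‖ := by
        have := lp.norm_apply_le_norm (by norm_num : (∞ : ℝ≥0∞) ≠ 0) (T (x n)) n
        rwa [seqOp_apply] at this
      have h2 := hf n
      linarith
  constructor
  · constructor
    · exact main1
    · intro h
      haveI : Fact ((1 : ℝ≥0∞) ≤ ∞) := ⟨le_top⟩
      exact main2 (h (lp (fun _ : ℕ => ℝ) ∞) inferInstance inferInstance inferInstance)
  · refine ⟨fun hSR => ?_, main2⟩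
    haveI : Fact ((1 : ℝ≥0∞) ≤ ∞) := ⟨le_top⟩
    exact main1 hSR (lp (fun _ : ℕ => ℝ) ∞) inferInstance inferInstance inferInstance
end

section
/- Let 1 < p ≤ ∞. A Banach space X has the p-Dunford-Pettis relatively compact property if and only if X has the (SR)_{1,p} property and X contains no isomorphic copy of c₀. -/
set_option linter.unusedSectionVars false
set_option linter.unusedVariables false
set_option maxHeartbeats 1000000


open Filter Topology NormedSpace Bornology
open scoped ENNReal ContinuousMap ZeroAtInfty

section Helpers
variable {X : Type*} [NormedAddCommGroup X] [NormedSpace ℝ X]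

lemma iSup_range_eq (x : ℕ → X) (F : X → ℝ) :
    (⨆ a : Set.range x, F a.1) = ⨆ n, F (x n) := by
  rw [iSup, iSup]
  congr 1
  ext r
  constructor
  · rintro ⟨⟨v, n, rfl⟩, rfl⟩; exact ⟨n, rfl⟩
  · rintro ⟨n, rfl⟩; exact ⟨⟨x n, n, rfl⟩, rfl⟩

lemma norm_bound_of_weakly_null {E : Type*} [NormedAddCommGroup E] [NormedSpace ℝ E]
    [CompleteSpace E] (x : ℕ → E)
    (h : ∀ Φ : StrongDual ℝ E, Tendsto (fun k => Φ (x k)) atTop (𝓝 0)) :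
    ∃ R : ℝ, 0 ≤ R ∧ ∀ k, ‖x k‖ ≤ R := by
  have key : ∀ f : StrongDual ℝ E, ∃ C, ∀ k : ℕ,
      ‖(inclusionInDoubleDualLi ℝ (E := E)) (x k) f‖ ≤ C := by
    intro f
    have hb : BddAbove (Set.range fun k => |f (x k)|) := by
      have h3 := (h f).abs
      simp only [abs_zero] at h3
      exact h3.bddAbove_range
    obtain ⟨C, hC⟩ := hb
    refine ⟨C, fun k => ?_⟩
    have h4 : |f (x k)| ≤ C := hC ⟨k, rfl⟩
    simpa [NormedSpace.inclusionInDoubleDualLi, Real.norm_eq_abs] using h4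
  obtain ⟨C, hC⟩ := banach_steinhaus key
  refine ⟨max C 0, le_max_right _ _, fun k => ?_⟩
  have h2 := hC k
  rw [(inclusionInDoubleDualLi ℝ (E := E)).norm_map] at h2
  exact h2.trans (le_max_left _ _)

lemma wuc_bound [CompleteSpace X] (y : ℕ → X)
    (hw : ∀ f : StrongDual ℝ X, Summable fun n => |f (y n)|) :
    ∃ C : ℝ, 0 < C ∧ ∀ f : StrongDual ℝ X, ∑' n, |f (y n)| ≤ C * ‖f‖ := by
  have key : ∀ f : StrongDual ℝ X, ∃ C, ∀ Fε : Finset ℕ × (ℕ → Bool),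
      ‖(inclusionInDoubleDualLi ℝ (E := X))
        (∑ n ∈ Fε.1, (if Fε.2 n then (1:ℝ) else -1) • y n) f‖ ≤ C := by
    intro f
    refine ⟨∑' n, |f (y n)|, fun Fε => ?_⟩
    calc ‖(inclusionInDoubleDualLi ℝ (E := X))
            (∑ n ∈ Fε.1, (if Fε.2 n then (1:ℝ) else -1) • y n) f‖
        = |f (∑ n ∈ Fε.1, (if Fε.2 n then (1:ℝ) else -1) • y n)| := by
          simp [NormedSpace.inclusionInDoubleDualLi, Real.norm_eq_abs]
      _ = |∑ n ∈ Fε.1, (if Fε.2 n then (1:ℝ) else -1) * f (y n)| := by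
          simp only [map_sum, map_smul, smul_eq_mul]
      _ ≤ ∑ n ∈ Fε.1, |(if Fε.2 n then (1:ℝ) else -1) * f (y n)| :=
          Finset.abs_sum_le_sum_abs _ _
      _ ≤ ∑ n ∈ Fε.1, |f (y n)| := by
          refine Finset.sum_le_sum fun n _ => ?_
          rw [abs_mul]
          by_cases hb : Fε.2 n <;> simp [hb]
      _ ≤ ∑' n, |f (y n)| := Summable.sum_le_tsum _ (fun n _ => abs_nonneg _) (hw f)
  obtain ⟨C', hC'⟩ := banach_steinhaus key
  refine ⟨max C' 1, lt_of_lt_of_le one_pos (le_max_right _ _), fun f => ?_⟩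
  have keyF : ∀ F : Finset ℕ, ∑ n ∈ F, |f (y n)| ≤ (max C' 1) * ‖f‖ := by
    intro F
    set ε : ℕ → Bool := fun n => decide (0 ≤ f (y n)) with hε
    have heq : ∑ n ∈ F, |f (y n)| = f (∑ n ∈ F, (if ε n then (1:ℝ) else -1) • y n) := by
      rw [map_sum]
      refine Finset.sum_congr rfl fun n _ => ?_
      by_cases h0 : 0 ≤ f (y n)
      · simp [hε, h0, abs_of_nonneg h0]
      · simp only [map_smul]
        rw [if_neg (by simpa [hε] using h0)]
        simp [abs_of_neg (lt_of_not_ge h0)]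
    rw [heq]
    calc f (∑ n ∈ F, (if ε n then (1:ℝ) else -1) • y n)
        ≤ ‖f (∑ n ∈ F, (if ε n then (1:ℝ) else -1) • y n)‖ := le_abs_self _
      _ ≤ ‖f‖ * ‖∑ n ∈ F, (if ε n then (1:ℝ) else -1) • y n‖ := f.le_opNorm _
      _ ≤ ‖f‖ * C' := by
          refine mul_le_mul_of_nonneg_left ?_ (norm_nonneg _)
          have h5 := hC' (F, ε)
          rwa [(inclusionInDoubleDualLi ℝ (E := X)).norm_map] at h5
      _ ≤ (max C' 1) * ‖f‖ := by
          rw [mul_comm]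
          exact mul_le_mul_of_nonneg_right (le_max_left _ _) (norm_nonneg _)
  exact Summable.tsum_le_of_sum_le (hw f) keyF

end Helpers

section CZero

/-- the canonical basis of `c₀`. -/
noncomputable def eb (n : ℕ) : C₀(ℕ, ℝ) :=
  ⟨⟨fun m => if m = n then 1 else 0, continuous_of_discreteTopology⟩, by
    rw [cocompact_eq_atTop]
    refine Tendsto.congr' ?_ tendsto_const_nhds
    filter_upwards [eventually_ge_atTop (n+1)] with m hm
    simp [Nat.ne_of_gt hm]⟩

@[simp] lemma eb_apply (n m : ℕ) : eb n m = if m = n then 1 else 0 := rfl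

lemma c0_norm_le (h : C₀(ℕ, ℝ)) {M : ℝ} (hM : 0 ≤ M) (hb : ∀ m, |h m| ≤ M) : ‖h‖ ≤ M := by
  rw [← ZeroAtInftyContinuousMap.norm_toBCF_eq_norm]
  exact BoundedContinuousFunction.norm_le_of_nonempty.mpr fun m => by
    simpa [Real.norm_eq_abs] using hb m

lemma c0_abs_apply_le (h : C₀(ℕ, ℝ)) (m : ℕ) : |h m| ≤ ‖h‖ := by
  rw [← ZeroAtInftyContinuousMap.norm_toBCF_eq_norm]
  simpa [Real.norm_eq_abs] using (h.toBCF.norm_coe_le_norm m)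

lemma c0_tendsto (h : C₀(ℕ, ℝ)) : Tendsto (fun m => h m) atTop (𝓝 0) := by
  have := h.zero_at_infty'
  rwa [cocompact_eq_atTop] at this

lemma norm_eb (n : ℕ) : ‖eb n‖ = 1 := by
  refine le_antisymm (c0_norm_le _ one_pos.le fun m => ?_) ?_
  · by_cases hm : m = n <;> simp [hm]
  · have := c0_abs_apply_le (eb n) n
    simpa using this

lemma norm_signsum_le (F : Finset ℕ) (ε : ℕ → Bool) :
    ‖∑ n ∈ F, (if ε n then (1:ℝ) else -1) • eb n‖ ≤ 1 := by
  refine c0_norm_le _ one_pos.le fun m => ?_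
  have happ : (∑ n ∈ F, (if ε n then (1:ℝ) else -1) • eb n) m
      = ∑ n ∈ F, (if ε n then (1:ℝ) else -1) * (if m = n then 1 else 0) := by
    have hm := map_sum (AddMonoidHom.mk' (fun h : C₀(ℕ,ℝ) => h m) (fun a b => by simp))
        (fun n => (if ε n then (1:ℝ) else -1) • eb n) F
    simp only [AddMonoidHom.mk'_apply] at hm
    rw [hm]
    exact Finset.sum_congr rfl fun n _ => by
      by_cases hε : ε n <;> by_cases hmn : m = n <;> simp [hε, hmn]
  rw [happ]
  have : ∑ n ∈ F, (if ε n then (1:ℝ) else -1) * (if m = n then 1 else 0)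
      = if m ∈ F then (if ε m then (1:ℝ) else -1) else 0 := by
    rw [← Finset.sum_ite_eq F m (fun n => if ε n then (1:ℝ) else -1)]
    refine Finset.sum_congr rfl fun n _ => ?_
    by_cases hmn : m = n <;> simp [hmn]
  rw [this]
  by_cases hmF : m ∈ F
  · by_cases hε : ε m <;> simp [hmF, hε]
  · simp [hmF]

/-- coefficients of a functional on `c₀` are absolutely summable with sum at most the norm -/
lemma dual_coeff_summable (g : StrongDual ℝ C₀(ℕ, ℝ)) :
    Summable (fun n => |g (eb n)|) ∧ ∑' n, |g (eb n)| ≤ ‖g‖ := by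
  have keyF : ∀ F : Finset ℕ, ∑ n ∈ F, |g (eb n)| ≤ ‖g‖ := by
    intro F
    set ε : ℕ → Bool := fun n => decide (0 ≤ g (eb n)) with hε
    have heq : ∑ n ∈ F, |g (eb n)| = g (∑ n ∈ F, (if ε n then (1:ℝ) else -1) • eb n) := by
      rw [map_sum]
      refine Finset.sum_congr rfl fun n _ => ?_
      by_cases h0 : 0 ≤ g (eb n)
      · simp [hε, h0, abs_of_nonneg h0]
      · simp only [map_smul]
        rw [if_neg (by simpa [hε] using h0)]
        simp [abs_of_neg (lt_of_not_ge h0)]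
    rw [heq]
    calc g (∑ n ∈ F, (if ε n then (1:ℝ) else -1) • eb n)
        ≤ ‖g (∑ n ∈ F, (if ε n then (1:ℝ) else -1) • eb n)‖ := le_abs_self _
      _ ≤ ‖g‖ * ‖∑ n ∈ F, (if ε n then (1:ℝ) else -1) • eb n‖ := g.le_opNorm _
      _ ≤ ‖g‖ * 1 := mul_le_mul_of_nonneg_left (norm_signsum_le F ε) (by positivity)
      _ = ‖g‖ := mul_one _
  have hs : Summable (fun n => |g (eb n)|) :=
    summable_of_sum_range_le (fun n => abs_nonneg _) fun n => keyF (Finset.range n)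
  exact ⟨hs, Summable.tsum_le_of_sum_le hs keyF⟩

end CZero

lemma tail_small (b : ℕ → ℝ) (hb : Summable fun n => |b n|) {δ : ℝ} (hδ : 0 < δ) :
    ∃ N : ℕ, ∀ F : Finset ℕ, (∀ n ∈ F, N ≤ n) → ∑ n ∈ F, |b n| < δ := by
  obtain ⟨s, hs⟩ := summable_iff_vanishing.mp hb (Metric.ball 0 δ) (Metric.ball_mem_nhds 0 hδ)
  refine ⟨s.sup id + 1, fun F hF => ?_⟩
  have hdisj : Disjoint F s := by
    rw [Finset.disjoint_left]
    intro n hnF hns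
    have h1 : n ≤ s.sup id := Finset.le_sup (f := id) hns
    have h2 := hF n hnF
    omega
  have h3 := hs F hdisj
  rw [Metric.mem_ball, Real.dist_eq, sub_zero] at h3
  calc ∑ n ∈ F, |b n| = abs (∑ n ∈ F, |b n|) :=
        (abs_of_nonneg (Finset.sum_nonneg fun n _ => abs_nonneg _)).symm
    _ < δ := h3

lemma schur_type (a : ℕ → ℕ → ℝ)
    (h1 : ∀ k, Summable fun n => |a k n|)
    (h3 : ∀ s : ℕ → ℝ, (∀ n, |s n| ≤ 1) →
      Tendsto (fun k => ∑' n, a k n * s n) atTop (𝓝 0)) :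
    Tendsto (fun k => ⨆ n, |a k n|) atTop (𝓝 0) := by
  classical
  by_contra hnot
  -- get ε and frequently large sup
  rw [Metric.tendsto_atTop] at hnot
  push_neg at hnot
  obtain ⟨ε, hε, hfreq⟩ := hnot
  have hfreq' : ∀ N, ∃ k, N ≤ k ∧ ε ≤ ⨆ n, |a k n| := by
    intro N
    obtain ⟨k, hk1, hk2⟩ := hfreq N
    rw [Real.dist_eq, sub_zero] at hk2
    refine ⟨k, hk1, ?_⟩
    calc ε ≤ abs (⨆ n, |a k n|) := hk2
      _ = ⨆ n, |a k n| := abs_of_nonneg (Real.iSup_nonneg fun n => abs_nonneg _)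
  -- coordinatewise convergence
  have hcoord : ∀ n, Tendsto (fun k => a k n) atTop (𝓝 0) := by
    intro n
    have hs1 : ∀ m : ℕ, |(fun m => if m = n then (1:ℝ) else 0) m| ≤ 1 := by
      intro m; by_cases hm : m = n <;> simp [hm]
    have := h3 _ hs1
    convert this using 2 with k
    rw [show (fun m => a k m * if m = n then (1:ℝ) else 0)
        = fun m => if m = n then a k n else 0 from funext fun m => by
          by_cases hm : m = n <;> simp [hm]]
    exact (tsum_ite_eq n (fun _ => a k n)).symm
  -- big coordinate existence
  have hbig : ∀ k, ε ≤ (⨆ n, |a k n|) → ∃ n, 3*ε/4 < |a k n| := by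
    intro k hk
    by_contra hno
    push_neg at hno
    have : (⨆ n, |a k n|) ≤ 3*ε/4 := Real.iSup_le (fun n => hno n) (by linarith)
    linarith
  -- step existence
  have hstep : ∀ st : ℕ × ℕ, ∃ st' : ℕ × ℕ, st.1 < st'.1 ∧ st.2 < st'.2 ∧
      (ε ≤ ⨆ n, |a st'.1 n|) ∧
      (∑ n ∈ Finset.range (st.2 + 1), |a st'.1 n| < ε/5) ∧
      (∀ F : Finset ℕ, (∀ n ∈ F, st'.2 < n) → ∑ n ∈ F, |a st'.1 n| < ε/5) := by
    rintro ⟨k₀, m₀⟩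
    have hhead : Tendsto (fun k => ∑ n ∈ Finset.range (m₀ + 1), |a k n|) atTop (𝓝 0) := by
      have : Tendsto (fun k => ∑ n ∈ Finset.range (m₀ + 1), |a k n|) atTop
          (𝓝 (∑ n ∈ Finset.range (m₀ + 1), (0:ℝ))) := by
        refine tendsto_finset_sum _ fun n _ => ?_
        simpa using (hcoord n).abs
      simpa using this
    rw [Metric.tendsto_atTop] at hhead
    obtain ⟨K, hK⟩ := hhead (ε/5) (by linarith)
    obtain ⟨k, hk1, hk2⟩ := hfreq' (max K (k₀ + 1))
    obtain ⟨N, hN⟩ := tail_small (a k) (h1 k) (show (0:ℝ) < ε/5 by linarith)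
    refine ⟨(k, N + m₀ + 1), ?_, ?_, hk2, ?_, ?_⟩
    · simp only; omega
    · simp only; omega
    · have := hK k (le_trans (le_max_left _ _) hk1)
      rw [Real.dist_eq, sub_zero] at this
      calc ∑ n ∈ Finset.range (m₀ + 1), |a k n|
          ≤ abs (∑ n ∈ Finset.range (m₀ + 1), |a k n|) := le_abs_self _
        _ < ε/5 := this
    · intro F hF
      exact hN F fun n hn => by have := hF n hn; omega
  choose step hstep1 hstep2 hstep3 hstep4 hstep5 using hstep
  set g : ℕ → ℕ × ℕ := fun j => step^[j] (0, 0) with hg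
  have hgsucc : ∀ j, g (j + 1) = step (g j) := by
    intro j; rw [hg]; simp [Function.iterate_succ_apply']
  have hk_mono : StrictMono fun j => (g j).1 := by
    refine strictMono_nat_of_lt_succ fun j => ?_
    rw [hgsucc j]; exact hstep1 (g j)
  have hm_mono : StrictMono fun j => (g j).2 := by
    refine strictMono_nat_of_lt_succ fun j => ?_
    rw [hgsucc j]; exact hstep2 (g j)
  -- uniqueness of blocks
  have huniq : ∀ i j n : ℕ, (g i).2 < n → n ≤ (g (i+1)).2 →
      (g j).2 < n → n ≤ (g (j+1)).2 → i = j := by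
    intro i j n hi1 hi2 hj1 hj2
    by_contra hne
    rcases lt_or_gt_of_ne hne with h | h
    · have : (g (i+1)).2 ≤ (g j).2 := hm_mono.monotone (Nat.succ_le_of_lt h)
      omega
    · have : (g (j+1)).2 ≤ (g i).2 := hm_mono.monotone (Nat.succ_le_of_lt h)
      omega
  set s : ℕ → ℝ := fun n =>
    if h : ∃ i, (g i).2 < n ∧ n ≤ (g (i+1)).2 then
      (if 0 ≤ a ((g (Nat.find h + 1)).1) n then 1 else -1) else 0 with hs_def
  have hs_le : ∀ n, |s n| ≤ 1 := by
    intro n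
    by_cases h : ∃ i, (g i).2 < n ∧ n ≤ (g (i+1)).2
    · have hsn : s n = (if 0 ≤ a ((g (Nat.find h + 1)).1) n then 1 else -1) := dif_pos h
      rw [hsn]
      by_cases h0 : 0 ≤ a ((g (Nat.find h + 1)).1) n <;> simp [h0]
    · have hsn : s n = 0 := dif_neg h
      rw [hsn]; simp
  -- key lower bound
  have hkey : ∀ j, 7*ε/20 ≤ ∑' n, a ((g (j+1)).1) n * s n := by
    intro j
    set k' := (g (j+1)).1 with hk'
    set B := Finset.Ioc (g j).2 (g (j+1)).2 with hB
    have hsummable : Summable fun n => a k' n * s n := by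
      refine Summable.of_norm_bounded (h1 k') fun n => ?_
      rw [Real.norm_eq_abs, abs_mul]
      calc |a k' n| * |s n| ≤ |a k' n| * 1 :=
            mul_le_mul_of_nonneg_left (hs_le n) (abs_nonneg _)
        _ = |a k' n| := mul_one _
    have hblock : ∀ n ∈ B, a k' n * s n = |a k' n| := by
      intro n hn
      rw [Finset.mem_Ioc] at hn
      have hex : ∃ i, (g i).2 < n ∧ n ≤ (g (i+1)).2 := ⟨j, hn.1, hn.2⟩
      have hsn : s n = (if 0 ≤ a ((g (Nat.find hex + 1)).1) n then 1 else -1) := dif_pos hex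
      have hfind : Nat.find hex = j :=
        huniq _ _ n (Nat.find_spec hex).1 (Nat.find_spec hex).2 hn.1 hn.2
      rw [hfind, ← hk'] at hsn
      rw [hsn]
      by_cases h0 : 0 ≤ a k' n
      · rw [if_pos h0, mul_one, abs_of_nonneg h0]
      · rw [if_neg h0, mul_neg_one, abs_of_neg (lt_of_not_ge h0)]
    -- split
    have hsplit := Summable.sum_add_tsum_compl (s := B) hsummable
    -- block lower bound
    have hq := hstep3 (g j); rw [← hgsucc j] at hq
    obtain ⟨nstar, hnstar⟩ := hbig k' hq
    have hhead := hstep4 (g j); rw [← hgsucc j] at hhead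
    have htail := hstep5 (g j); rw [← hgsucc j] at htail
    have hnstarB : nstar ∈ B := by
      rw [hB, Finset.mem_Ioc]
      constructor
      · by_contra hle
        push_neg at hle
        have h5 : |a k' nstar| ≤ ∑ n ∈ Finset.range ((g j).2 + 1), |a k' n| :=
          Finset.single_le_sum (f := fun n => |a k' n|) (fun n _ => abs_nonneg _)
            (Finset.mem_range.mpr (by omega))
        linarith
      · by_contra hgt
        push_neg at hgt
        have h5 := htail {nstar} (by simpa using hgt)
        simp only [Finset.sum_singleton] at h5
        linarith
    have hblock_ge : 3*ε/4 ≤ ∑ n ∈ B, a k' n * s n := by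
      rw [Finset.sum_congr rfl hblock]
      calc 3*ε/4 ≤ |a k' nstar| := le_of_lt hnstar
        _ ≤ ∑ n ∈ B, |a k' n| :=
            Finset.single_le_sum (f := fun n => |a k' n|) (fun n _ => abs_nonneg _) hnstarB
    -- rest bound
    have hrest : |∑' n : ((B : Set ℕ)ᶜ : Set ℕ), a k' n * s n| ≤ 2*ε/5 := by
      have hsub : Summable fun n : ((B : Set ℕ)ᶜ : Set ℕ) => a k' n * s n :=
        hsummable.subtype _
      have habs_sub : Summable fun n : ((B : Set ℕ)ᶜ : Set ℕ) => |a k' n.1 * s n.1| := by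
        have : Summable fun n => |a k' n * s n| := by
          simpa [Real.norm_eq_abs] using hsummable.abs
        exact this.subtype _
      calc |∑' n : ((B : Set ℕ)ᶜ : Set ℕ), a k' n * s n|
          ≤ ∑' n : ((B : Set ℕ)ᶜ : Set ℕ), |a k' n.1 * s n.1| := by
            have h6 : Summable fun n : ((B : Set ℕ)ᶜ : Set ℕ) => ‖a k' n.1 * s n.1‖ := by
              simpa only [Real.norm_eq_abs] using habs_sub
            have h7 := norm_tsum_le_tsum_norm h6
            simpa only [Real.norm_eq_abs] using h7
        _ ≤ 2*ε/5 := by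
            refine Summable.tsum_le_of_sum_le habs_sub fun G => ?_
            set F : Finset ℕ := G.image Subtype.val with hF
            have hFsum : ∑ i ∈ G, |a k' i.1 * s i.1| = ∑ n ∈ F, |a k' n * s n| := by
              rw [hF, Finset.sum_image (fun x _ y _ h => Subtype.ext h)]
            rw [hFsum]
            have hFnotB : ∀ n ∈ F, n ∉ B := by
              intro n hn
              rw [hF, Finset.mem_image] at hn
              obtain ⟨⟨n', hn'⟩, _, rfl⟩ := hn
              simpa using hn'
            set F₁ := F.filter (fun n => n ≤ (g j).2) with hF₁
            set F₂ := F.filter (fun n => (g (j+1)).2 < n) with hF₂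
            have hFsub : F ⊆ F₁ ∪ F₂ := by
              intro n hn
              have := hFnotB n hn
              rw [hB, Finset.mem_Ioc] at this
              push_neg at this
              rw [Finset.mem_union, hF₁, hF₂, Finset.mem_filter, Finset.mem_filter]
              by_cases hle : n ≤ (g j).2
              · exact Or.inl ⟨hn, hle⟩
              · push_neg at hle
                exact Or.inr ⟨hn, this hle⟩
            have hdisj : Disjoint F₁ F₂ := by
              rw [Finset.disjoint_left]
              intro n hn1 hn2
              rw [hF₁, Finset.mem_filter] at hn1
              rw [hF₂, Finset.mem_filter] at hn2
              have hmj : (g j).2 < (g (j+1)).2 := hm_mono (Nat.lt_succ_self j)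
              omega
            have hterm : ∀ n, |a k' n * s n| ≤ |a k' n| := by
              intro n
              rw [abs_mul]
              calc |a k' n| * |s n| ≤ |a k' n| * 1 :=
                  mul_le_mul_of_nonneg_left (hs_le n) (abs_nonneg _)
                _ = _ := mul_one _
            calc ∑ n ∈ F, |a k' n * s n|
                ≤ ∑ n ∈ F₁ ∪ F₂, |a k' n * s n| :=
                  Finset.sum_le_sum_of_subset_of_nonneg hFsub fun n _ _ => abs_nonneg _
              _ = ∑ n ∈ F₁, |a k' n * s n| + ∑ n ∈ F₂, |a k' n * s n| :=
                  Finset.sum_union hdisj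
              _ ≤ ∑ n ∈ F₁, |a k' n| + ∑ n ∈ F₂, |a k' n| :=
                  add_le_add (Finset.sum_le_sum fun n _ => hterm n)
                    (Finset.sum_le_sum fun n _ => hterm n)
              _ ≤ 2*ε/5 := by
                  have hb1 : ∑ n ∈ F₁, |a k' n| < ε/5 := by
                    refine lt_of_le_of_lt ?_ hhead
                    refine Finset.sum_le_sum_of_subset_of_nonneg ?_
                      fun n _ _ => abs_nonneg _
                    intro n hn
                    rw [hF₁, Finset.mem_filter] at hn
                    rw [Finset.mem_range]
                    omega
                  have hb2 : ∑ n ∈ F₂, |a k' n| < ε/5 := by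
                    refine htail F₂ fun n hn => ?_
                    rw [hF₂, Finset.mem_filter] at hn
                    exact hn.2
                  linarith
    have := hsplit
    -- ∑ B + ∑' compl = ∑'
    have hge : 3*ε/4 - 2*ε/5 ≤ ∑' n, a k' n * s n := by
      rw [← this]
      have := neg_abs_le (∑' n : ((B : Set ℕ)ᶜ : Set ℕ), a k' n * s n)
      linarith
    linarith
  -- contradiction
  have htend := (h3 s hs_le).comp
    ((hk_mono.comp (strictMono_id.add_const 1)).tendsto_atTop)
  have : (0:ℝ) ≥ 7*ε/20 := ge_of_tendsto htend (Eventually.of_forall fun j => hkey j)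
  linarith

lemma c0_argmax (h : C₀(ℕ, ℝ)) (hne : h ≠ 0) : ∃ k, |h k| = ‖h‖ := by
  have hpos : 0 < ‖h‖ := norm_pos_iff.mpr hne
  obtain ⟨N, hN⟩ := (Metric.tendsto_atTop.mp (c0_tendsto h)) (‖h‖/2) (by linarith)
  obtain ⟨k, hkmem, hkmax⟩ := Finset.exists_max_image (Finset.range (N+1)) (fun m => |h m|)
    ⟨0, Finset.mem_range.mpr (by omega)⟩
  refine ⟨k, le_antisymm (c0_abs_apply_le h k) ?_⟩
  have hbound : ∀ m, |h m| ≤ max (|h k|) (‖h‖/2) := by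
    intro m
    by_cases hm : m < N + 1
    · exact le_max_of_le_left (hkmax m (Finset.mem_range.mpr hm))
    · push_neg at hm
      have h9 := hN m (by omega)
      rw [Real.dist_eq, sub_zero] at h9
      exact le_max_of_le_right h9.le
  have h2 : ‖h‖ ≤ max (|h k|) (‖h‖/2) :=
    c0_norm_le h (le_max_of_le_right (by linarith)) hbound
  rcases max_cases (|h k|) (‖h‖/2) with ⟨heq, _⟩ | ⟨heq, hlt⟩
  · rw [heq] at h2; exact h2
  · rw [heq] at h2; linarith


section Forward
variable {X : Type*} [NormedAddCommGroup X] [NormedSpace ℝ X] [CompleteSpace X]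

lemma forward_no_c0 {p : ℝ≥0∞} (hp : 1 < p)
    (hDP : ∀ x : ℕ → X, PRightNull p x → Tendsto (fun n => ‖x n‖) atTop (𝓝 0))
    (T : C₀(ℕ, ℝ) →L[ℝ] X) (c : ℝ) (hc : 0 < c) (hT : ∀ f : C₀(ℕ, ℝ), c * ‖f‖ ≤ ‖T f‖) :
    False := by
  classical
  set x : ℕ → X := fun n => T (eb n) with hx
  -- coefficients of functionals composed with T
  have hcoeff : ∀ f : StrongDual ℝ X, Summable (fun n => |f (x n)|) ∧ ∑' n, |f (x n)| ≤ ‖T‖ * ‖f‖ := by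
    intro f
    have h1 := dual_coeff_summable (f.comp T)
    refine ⟨h1.1, h1.2.trans ?_⟩
    calc ‖f.comp T‖ ≤ ‖f‖ * ‖T‖ := f.opNorm_comp_le T
      _ = ‖T‖ * ‖f‖ := mul_comm _ _
  have hxnull : PRightNull p x := by
    constructor
    · -- weakly p-summable
      rw [WeaklyPSummable]
      by_cases hptop : p = ∞
      · rw [if_pos hptop]
        intro f
        exact ((hcoeff f).1.of_abs).tendsto_atTop_zero
      · rw [if_neg hptop]
        intro f
        have h1 : Memℓp (fun n => f (x n)) 1 := by
          apply memℓp_gen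
          simpa using (hcoeff f).1
        exact h1.of_exponent_ge hp.le
    · constructor
      · rw [isBounded_iff_forall_norm_le]
        refine ⟨‖T‖, ?_⟩
        rintro v ⟨n, rfl⟩
        calc ‖x n‖ ≤ ‖T‖ * ‖eb n‖ := T.le_opNorm _
          _ = ‖T‖ := by rw [norm_eb, mul_one]
      · intro f hf
        set a : ℕ → ℕ → ℝ := fun k n => f k (x n) with ha
        have h1 : ∀ k, Summable fun n => |a k n| := fun k => (hcoeff (f k)).1
        have h3 : ∀ s : ℕ → ℝ, (∀ n, |s n| ≤ 1) →
            Tendsto (fun k => ∑' n, a k n * s n) atTop (𝓝 0) := by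
          intro s hs
          -- the functional on the dual
          have hsummable : ∀ g : StrongDual ℝ X, Summable fun n => g (x n) * s n := by
            intro g
            refine Summable.of_norm_bounded (hcoeff g).1 fun n => ?_
            rw [Real.norm_eq_abs, abs_mul]
            calc |g (x n)| * |s n| ≤ |g (x n)| * 1 :=
                mul_le_mul_of_nonneg_left (hs n) (abs_nonneg _)
              _ = _ := mul_one _
          set L : StrongDual ℝ X →ₗ[ℝ] ℝ :=
            { toFun := fun g => ∑' n, g (x n) * s n
              map_add' := fun g1 g2 => by
                simp only [ContinuousLinearMap.add_apply, add_mul]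
                exact Summable.tsum_add (hsummable g1) (hsummable g2)
              map_smul' := fun r g => by
                simp only [ContinuousLinearMap.coe_smul', Pi.smul_apply, smul_eq_mul,
                  RingHom.id_apply, mul_assoc]
                exact tsum_mul_left } with hL
          have habs : ∀ g : StrongDual ℝ X, Summable fun n => |g (x n) * s n| := by
            intro g
            have := (hsummable g).abs
            exact this
          have hterm : ∀ (g : StrongDual ℝ X) (n : ℕ), |g (x n) * s n| ≤ |g (x n)| := by
            intro g n
            rw [abs_mul]
            calc |g (x n)| * |s n| ≤ |g (x n)| * 1 :=
                mul_le_mul_of_nonneg_left (hs n) (abs_nonneg _)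
              _ = _ := mul_one _
          have hLbound : ∀ g : StrongDual ℝ X, ‖L g‖ ≤ ‖T‖ * ‖g‖ := by
            intro g
            have h7 : |∑' n, g (x n) * s n| ≤ ∑' n, |g (x n) * s n| := by
              have h8 : ‖∑' n, g (x n) * s n‖ ≤ ∑' n, ‖g (x n) * s n‖ :=
                norm_tsum_le_tsum_norm (f := fun n => g (x n) * s n)
                  (by simpa only [Real.norm_eq_abs] using habs g)
              simpa only [Real.norm_eq_abs] using h8
            have h9 : (∑' n, |g (x n) * s n|) ≤ ∑' n, |g (x n)| :=
              Summable.tsum_le_tsum (hterm g) (habs g) (hcoeff g).1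
            calc ‖L g‖ = |∑' n, g (x n) * s n| := rfl
              _ ≤ ∑' n, |g (x n)| := h7.trans h9
              _ ≤ ‖T‖ * ‖g‖ := (hcoeff g).2
          set Φ : StrongDual ℝ (StrongDual ℝ X) := L.mkContinuous ‖T‖ hLbound with hΦ
          exact hf Φ
        have := schur_type a h1 h3
        -- rewrite the iSup
        have heq : ∀ k, (⨆ v : Set.range x, |f k v.1|) = ⨆ n, |a k n| := by
          intro k
          exact iSup_range_eq x (fun v => |f k v|)
        refine Tendsto.congr (fun k => (heq k).symm) this
  have hlim := hDP x hxnull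
  have : (0:ℝ) ≥ c := by
    refine ge_of_tendsto hlim (Eventually.of_forall fun n => ?_)
    calc c = c * ‖eb n‖ := by rw [norm_eb, mul_one]
      _ ≤ ‖T (eb n)‖ := hT _
      _ = ‖x n‖ := rfl
  linarith

end Forward

structure BPState where
  idx : ℕ
  al : ℕ
  be : ℕ
  em : ℕ
  lam : ℕ

section BP
variable {X : Type*} [NormedAddCommGroup X] [NormedSpace ℝ X] [CompleteSpace X]

lemma bp_embedding (y : ℕ → X) (hw : ∀ f : StrongDual ℝ X, Summable fun n => |f (y n)|)
    {ε : ℝ} (hε : 0 < ε) (hlow : ∀ n, ε ≤ ‖y n‖) :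
    ∃ T : C₀(ℕ, ℝ) →L[ℝ] X, ∃ c > (0:ℝ), ∀ h : C₀(ℕ, ℝ), c * ‖h‖ ≤ ‖T h‖ := by
  classical
  obtain ⟨C, hC, hCb⟩ := wuc_bound y hw
  -- norming functionals
  have hyne : ∀ n, y n ≠ 0 := by
    intro n hn
    have := hlow n
    rw [hn, norm_zero] at this
    linarith
  have hgex : ∀ n, ∃ g : StrongDual ℝ X, ‖g‖ = 1 ∧ g (y n) = ‖y n‖ := by
    intro n
    obtain ⟨g, hg1, hg2⟩ := exists_dual_vector ℝ (y n) (norm_ne_zero_iff.mpr (hyne n))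
    exact ⟨g, hg1, by exact_mod_cast hg2⟩
  choose g hgnorm hgy using hgex
  -- diagonal subsequence
  have hmem : ∀ i : ℕ, (fun n => g i (y n)) ∈ Set.pi Set.univ (fun n => Set.Icc (-‖y n‖) (‖y n‖)) := by
    intro i
    rw [Set.mem_pi]
    intro n _
    have habs : |g i (y n)| ≤ ‖y n‖ := by
      calc |g i (y n)| = ‖g i (y n)‖ := rfl
        _ ≤ ‖g i‖ * ‖y n‖ := (g i).le_opNorm _
        _ = ‖y n‖ := by rw [hgnorm i, one_mul]
    rw [Set.mem_Icc]
    constructor <;> linarith [abs_le.mp habs |>.1, abs_le.mp habs |>.2]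
  have hcompact : IsCompact (Set.pi Set.univ fun n => Set.Icc (-(‖y n‖)) (‖y n‖)) :=
    isCompact_univ_pi fun n => isCompact_Icc
  obtain ⟨cf, _, ψ, hψ, hconv⟩ := hcompact.isSeqCompact hmem
  rw [tendsto_pi_nhds] at hconv
  have hconv' : ∀ n, Tendsto (fun l => g (ψ l) (y n)) atTop (𝓝 (cf n)) := fun n => hconv n
  -- cf tends to zero
  have hcf_bound : ∀ F : Finset ℕ, ∑ n ∈ F, |cf n| ≤ C := by
    intro F
    have hlim : Tendsto (fun l => ∑ n ∈ F, |g (ψ l) (y n)|) atTop (𝓝 (∑ n ∈ F, |cf n|)) :=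
      tendsto_finset_sum _ fun n _ => (hconv' n).abs
    refine le_of_tendsto hlim (Eventually.of_forall fun l => ?_)
    calc ∑ n ∈ F, |g (ψ l) (y n)| ≤ ∑' n, |g (ψ l) (y n)| :=
          Summable.sum_le_tsum _ (fun n _ => abs_nonneg _) (hw _)
      _ ≤ C * ‖g (ψ l)‖ := hCb _
      _ = C := by rw [hgnorm, mul_one]
  have hcf_summable : Summable fun n => |cf n| :=
    summable_of_sum_range_le (fun n => abs_nonneg _) fun n => hcf_bound (Finset.range n)
  have hcf0 : Tendsto (fun n => |cf n|) atTop (𝓝 0) := hcf_summable.tendsto_atTop_zero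
  set δ : ℝ := ε/16 with hδ
  have hδpos : 0 < δ := by rw [hδ]; linarith
  -- step existence
  have hstep : ∀ s : BPState, ∃ s' : BPState, s'.idx = s.idx + 1 ∧
      s.be < s'.al ∧ s.lam ≤ s'.al ∧ s'.al < s'.be ∧ s'.lam ≤ s'.be ∧
      s.lam ≤ s'.lam ∧ s.em < s'.em ∧ s.em < ψ s'.al ∧
      |cf (ψ s'.al)| < ε/8 ∧
      (∀ l, s'.lam ≤ l →
        |g (ψ l) (y (ψ s'.al)) - cf (ψ s'.al)| < min (δ*(1/2)^(s.idx+2)) (ε/8)) ∧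
      (∀ F : Finset ℕ, (∀ n ∈ F, s'.em < n) → ∑ n ∈ F, |g (ψ s'.al) (y n)| < δ) ∧
      (∀ F : Finset ℕ, (∀ n ∈ F, s'.em < n) → ∑ n ∈ F, |g (ψ s'.be) (y n)| < δ) := by
    intro s
    -- choose α
    obtain ⟨N, hN⟩ := (Metric.tendsto_atTop.mp hcf0) (ε/8) (by linarith)
    set α := max (max (s.be + 1) s.lam) (max N (s.em + 1)) with hα
    have hαcf : |cf (ψ α)| < ε/8 := by
      have h1 : N ≤ α := le_trans (le_max_left _ _) (le_max_right _ _)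
      have h2 : N ≤ ψ α := le_trans (h1.trans (hψ.le_apply)) (le_refl _)
      have := hN (ψ α) h2
      rw [Real.dist_eq, sub_zero] at this
      calc |cf (ψ α)| ≤ abs (|cf (ψ α)|) := le_abs_self _
        _ < ε/8 := this
    -- choose lam'
    have htol : 0 < min (δ*(1/2)^(s.idx+2)) (ε/8) := by
      apply lt_min
      · positivity
      · linarith
    obtain ⟨L, hL⟩ := (Metric.tendsto_atTop.mp (hconv' (ψ α))) _ htol
    set lam' := max s.lam L with hlam'
    set β := max (α + 1) lam' with hβ
    -- tails
    obtain ⟨N₁, hN₁⟩ := tail_small (fun n => g (ψ α) (y n)) (hw _) hδpos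
    obtain ⟨N₂, hN₂⟩ := tail_small (fun n => g (ψ β) (y n)) (hw _) hδpos
    set M' := max (s.em + 1) (max N₁ N₂) with hM'
    refine ⟨⟨s.idx + 1, α, β, M', lam'⟩, rfl, ?_, ?_, ?_, ?_, ?_, ?_, ?_, hαcf, ?_, ?_, ?_⟩
    · simp only [hα]; omega
    · simp only [hα]; omega
    · simp only [hβ]; omega
    · simp only [hβ]; omega
    · simp only [hlam']; omega
    · simp only [hM']; omega
    · have : s.em + 1 ≤ α := le_trans (le_max_right _ _) (le_max_right _ _)
      have h2 : α ≤ ψ α := hψ.le_apply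
      simp only
      omega
    · intro l hl
      have : L ≤ l := le_trans (le_trans (le_max_right _ _) (le_refl lam')) hl
      have := hL l this
      rwa [Real.dist_eq] at this
    · intro F hF
      refine hN₁ F fun n hn => ?_
      have := hF n hn
      simp only [hM'] at this
      omega
    · intro F hF
      refine hN₂ F fun n hn => ?_
      have := hF n hn
      simp only [hM'] at this
      omega
  choose step hs_idx hs_ba hs_la hs_ab hs_lb hs_ll hs_mm hs_mψ hs_cf hs_prom hs_t1 hs_t2
    using hstep
  set st : ℕ → BPState := fun k => step^[k] ⟨0,0,0,0,0⟩ with hst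
  have hstsucc : ∀ k, st (k + 1) = step (st k) := by
    intro k; rw [hst]; simp [Function.iterate_succ_apply']
  have hidx : ∀ k, (st k).idx = k := by
    intro k
    induction k with
    | zero => rw [hst]; rfl
    | succ k ih => rw [hstsucc, hs_idx, ih]
  have hem_mono : Monotone fun k => (st k).em := by
    refine monotone_nat_of_le_succ fun k => ?_
    rw [hstsucc]
    exact (hs_mm (st k)).le
  have hlam_mono : Monotone fun k => (st k).lam := by
    refine monotone_nat_of_le_succ fun k => ?_
    rw [hstsucc]
    exact hs_ll (st k)
  -- basic sequence data
  set A : ℕ → ℕ := fun k => (st (k+1)).al with hA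
  set B : ℕ → ℕ := fun k => (st (k+1)).be with hB
  set z : ℕ → X := fun k => y (ψ (A k)) with hz
  set w : ℕ → StrongDual ℝ X := fun k => g (ψ (A k)) - g (ψ (B k)) with hwdef
  have hwnorm : ∀ k, ‖w k‖ ≤ 2 := by
    intro k
    calc ‖w k‖ ≤ ‖g (ψ (A k))‖ + ‖g (ψ (B k))‖ := norm_sub_le _ _
      _ = 2 := by rw [hgnorm, hgnorm]; norm_num
  have hAB : ∀ k, A k < B k := by
    intro k
    show (st (k+1)).al < (st (k+1)).be
    rw [hstsucc]
    exact hs_ab (st k)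
  have hBA : ∀ k, B k < A (k+1) := by
    intro k
    show (st (k+1)).be < (st (k+2)).al
    rw [hstsucc (k+1)]
    exact hs_ba (st (k+1))
  have hA_strict : StrictMono A := strictMono_nat_of_lt_succ fun k => lt_trans (hAB k) (hBA k)
  have hψA_strict : StrictMono fun k => ψ (A k) := fun i j hij => hψ (hA_strict hij)
  have hψA_inj : Function.Injective fun k => ψ (A k) := hψA_strict.injective
  -- promise rephrased
  have hprom : ∀ k, ∀ l, (st (k+1)).lam ≤ l →
      |g (ψ l) (y (ψ (A k))) - cf (ψ (A k))| < min (δ*(1/2)^(k+2)) (ε/8) := by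
    intro k l hl
    rw [show (st (k+1)).lam = (step (st k)).lam from by rw [hstsucc]] at hl
    have h0 := hs_prom (st k) l hl
    rw [hidx] at h0
    rw [show A k = (step (st k)).al from by show (st (k+1)).al = _; rw [hstsucc]]
    exact h0
  have hcfA : ∀ k, |cf (ψ (A k))| < ε/8 := by
    intro k
    rw [show A k = (step (st k)).al from by show (st (k+1)).al = _; rw [hstsucc]]
    exact hs_cf (st k)
  have htailA : ∀ k (F : Finset ℕ), (∀ n ∈ F, (st (k+1)).em < n) →
      ∑ n ∈ F, |g (ψ (A k)) (y n)| < δ := by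
    intro k F hF
    rw [show A k = (step (st k)).al from by show (st (k+1)).al = _; rw [hstsucc]]
    refine hs_t1 (st k) F fun n hn => ?_
    rw [show (step (st k)).em = (st (k+1)).em from by rw [hstsucc]]
    exact hF n hn
  have htailB : ∀ k (F : Finset ℕ), (∀ n ∈ F, (st (k+1)).em < n) →
      ∑ n ∈ F, |g (ψ (B k)) (y n)| < δ := by
    intro k F hF
    rw [show B k = (step (st k)).be from by show (st (k+1)).be = _; rw [hstsucc]]
    refine hs_t2 (st k) F fun n hn => ?_
    rw [show (step (st k)).em = (st (k+1)).em from by rw [hstsucc]]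
    exact hF n hn
  have hψAem : ∀ j, (st j).em < ψ (A j) := by
    intro j
    rw [show A j = (step (st j)).al from by show (st (j+1)).al = _; rw [hstsucc]]
    exact hs_mψ (st j)
  -- E1
  have hE1 : ∀ k, 3*ε/4 ≤ w k (z k) := by
    intro k
    have h1 : w k (z k) = ‖y (ψ (A k))‖ - g (ψ (B k)) (y (ψ (A k))) := by
      rw [hwdef, hz]
      simp only [ContinuousLinearMap.sub_apply]
      rw [hgy]
    have h2 : (st (k+1)).lam ≤ B k := by
      show (st (k+1)).lam ≤ (st (k+1)).be
      rw [hstsucc]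
      exact hs_lb (st k)
    have h3 := (lt_min_iff.mp (hprom k (B k) h2)).2
    have h4 := hcfA k
    have h5 := hlow (ψ (A k))
    rw [h1]
    have hb1 := abs_lt.mp h3
    have hb2 := abs_lt.mp h4
    have hzz : z k = y (ψ (A k)) := rfl
    linarith [hb1.1, hb1.2, hb2.1, hb2.2]
  -- E2
  have hE2 : ∀ k j, j < k → |w k (z j)| ≤ 2*(δ*(1/2)^(j+2)) := by
    intro k j hjk
    have hAk : (st (j+1)).lam ≤ A k := by
      calc (st (j+1)).lam ≤ (st k).lam := hlam_mono (by omega)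
        _ ≤ A k := by
            show (st k).lam ≤ (st (k+1)).al
            rw [hstsucc]
            exact hs_la (st k)
    have hBk : (st (j+1)).lam ≤ B k := by
      calc (st (j+1)).lam ≤ (st (k+1)).lam := hlam_mono (by omega)
        _ ≤ B k := by
            show (st (k+1)).lam ≤ (st (k+1)).be
            rw [hstsucc]
            exact hs_lb (st k)
    have h1 := (lt_min_iff.mp (hprom j (A k) hAk)).1
    have h2 := (lt_min_iff.mp (hprom j (B k) hBk)).1
    have heq : w k (z j) = (g (ψ (A k)) (y (ψ (A j))) - cf (ψ (A j)))
        - (g (ψ (B k)) (y (ψ (A j))) - cf (ψ (A j))) := by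
      rw [hwdef, hz]
      simp only [ContinuousLinearMap.sub_apply]
      ring
    rw [heq]
    calc |(g (ψ (A k)) (y (ψ (A j))) - cf (ψ (A j)))
          - (g (ψ (B k)) (y (ψ (A j))) - cf (ψ (A j)))|
        ≤ |g (ψ (A k)) (y (ψ (A j))) - cf (ψ (A j))|
          + |g (ψ (B k)) (y (ψ (A j))) - cf (ψ (A j))| := abs_sub _ _
      _ ≤ 2*(δ*(1/2)^(j+2)) := by linarith
  -- E3
  have hE3 : ∀ k (F : Finset ℕ), (∀ j ∈ F, k < j) → ∑ j ∈ F, |w k (z j)| ≤ 2*δ := by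
    intro k F hF
    have hterm : ∀ j ∈ F, |w k (z j)| ≤ |g (ψ (A k)) (z j)| + |g (ψ (B k)) (z j)| := by
      intro j _
      rw [hwdef]
      simp only [ContinuousLinearMap.sub_apply]
      exact abs_sub _ _
    have himage : ∀ n ∈ F.image (fun j => ψ (A j)), (st (k+1)).em < n := by
      intro n hn
      rw [Finset.mem_image] at hn
      obtain ⟨j, hjF, rfl⟩ := hn
      have hj := hF j hjF
      calc (st (k+1)).em ≤ (st j).em := hem_mono (by omega)
        _ < ψ (A j) := hψAem j
    have hinjF : ∀ x ∈ F, ∀ y ∈ F, ψ (A x) = ψ (A y) → x = y :=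
      fun x _ y _ hxy => hψA_inj hxy
    have hsumA : ∑ j ∈ F, |g (ψ (A k)) (z j)| < δ := by
      have := htailA k (F.image (fun j => ψ (A j))) himage
      rwa [Finset.sum_image hinjF] at this
    have hsumB : ∑ j ∈ F, |g (ψ (B k)) (z j)| < δ := by
      have := htailB k (F.image (fun j => ψ (A j))) himage
      rwa [Finset.sum_image hinjF] at this
    calc ∑ j ∈ F, |w k (z j)|
        ≤ ∑ j ∈ F, (|g (ψ (A k)) (z j)| + |g (ψ (B k)) (z j)|) := Finset.sum_le_sum hterm
      _ = ∑ j ∈ F, |g (ψ (A k)) (z j)| + ∑ j ∈ F, |g (ψ (B k)) (z j)| :=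
          Finset.sum_add_distrib
      _ ≤ 2*δ := by linarith
  -- summability of coefficients along the subsequence
  have hzsum : ∀ f : StrongDual ℝ X, Summable fun j => |f (z j)| := by
    intro f
    exact (hw f).comp_injective hψA_inj
  have hzle : ∀ f : StrongDual ℝ X, ∑' j, |f (z j)| ≤ C * ‖f‖ := by
    intro f
    refine le_trans (Summable.tsum_le_tsum_of_inj (fun k => ψ (A k)) hψA_inj
      (fun c _ => abs_nonneg _) (fun j => le_refl _) (hzsum f) (hw f)) (hCb f)
  -- geometric bound
  have hgeo_summable : Summable fun j : ℕ => ((1:ℝ)/2)^(j+2) := by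
    have h0 : Summable fun j : ℕ => ((1:ℝ)/2)^j :=
      summable_geometric_of_lt_one (by norm_num) (by norm_num)
    have := h0.mul_right (((1:ℝ)/2)^2)
    refine this.congr fun j => ?_
    rw [← pow_add]
  have hgeo_tsum : ∑' j : ℕ, ((1:ℝ)/2)^(j+2) ≤ 1/2 := by
    have h0 : ∑' j : ℕ, ((1:ℝ)/2)^j = 2 := by
      rw [tsum_geometric_of_lt_one (by norm_num) (by norm_num)]
      norm_num
    have h1 : ∑' j : ℕ, ((1:ℝ)/2)^(j+2) = (∑' j : ℕ, ((1:ℝ)/2)^j) * ((1:ℝ)/2)^2 := by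
      rw [← tsum_mul_right]
      exact tsum_congr fun j => by rw [← pow_add]
    rw [h1, h0]
    norm_num
  -- off-diagonal bound
  have hwzsumm : ∀ k, Summable fun j => |w k (z j)| := fun k => hzsum (w k)
  have hoff : ∀ k, ∑' j, (if j = k then 0 else |w k (z j)|) ≤ 3*δ := by
    intro k
    have hsumm : Summable fun j => (if j = k then 0 else |w k (z j)|) := by
      refine Summable.of_nonneg_of_le (fun j => ?_) (fun j => ?_) (hwzsumm k)
      · split
        · exact le_refl _
        · exact abs_nonneg _
      · split
        · exact abs_nonneg _
        · exact le_refl _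
    refine Summable.tsum_le_of_sum_le hsumm fun F => ?_
    have hF_eq : ∑ j ∈ F, (if j = k then 0 else |w k (z j)|)
        = ∑ j ∈ F.filter (fun j => ¬ j = k), |w k (z j)| := by
      rw [Finset.sum_filter]
      refine Finset.sum_congr rfl fun j _ => ?_
      by_cases hj : j = k <;> simp [hj]
    rw [hF_eq]
    set F₁ := (F.filter (fun j => ¬ j = k)).filter (fun j => j < k) with hF₁
    set F₂ := (F.filter (fun j => ¬ j = k)).filter (fun j => k < j) with hF₂
    have hsubset : F.filter (fun j => ¬ j = k) ⊆ F₁ ∪ F₂ := by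
      intro j hj
      have hne : ¬ j = k := (Finset.mem_filter.mp hj).2
      rcases Nat.lt_or_ge j k with h | h
      · exact Finset.mem_union_left _ (Finset.mem_filter.mpr ⟨hj, h⟩)
      · exact Finset.mem_union_right _ (Finset.mem_filter.mpr ⟨hj, by omega⟩)
    have hdisj : Disjoint F₁ F₂ := by
      rw [Finset.disjoint_left]
      intro j hj1 hj2
      rw [hF₁, Finset.mem_filter] at hj1
      rw [hF₂, Finset.mem_filter] at hj2
      omega
    have hsum1 : ∑ j ∈ F₁, |w k (z j)| ≤ δ := by
      have hstep1 : ∀ j ∈ F₁, |w k (z j)| ≤ 2*δ*((1:ℝ)/2)^(j+2) := by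
        intro j hj
        rw [hF₁, Finset.mem_filter] at hj
        have := hE2 k j hj.2
        calc |w k (z j)| ≤ 2*(δ*(1/2)^(j+2)) := this
          _ = 2*δ*((1:ℝ)/2)^(j+2) := by ring
      calc ∑ j ∈ F₁, |w k (z j)| ≤ ∑ j ∈ F₁, 2*δ*((1:ℝ)/2)^(j+2) :=
            Finset.sum_le_sum hstep1
        _ = 2*δ * ∑ j ∈ F₁, ((1:ℝ)/2)^(j+2) := by rw [Finset.mul_sum]
        _ ≤ 2*δ * (1/2) := by
            refine mul_le_mul_of_nonneg_left ?_ (by positivity)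
            exact le_trans (Summable.sum_le_tsum F₁ (fun j _ => by positivity) hgeo_summable) hgeo_tsum
        _ = δ := by ring
    have hsum2 : ∑ j ∈ F₂, |w k (z j)| ≤ 2*δ := by
      refine hE3 k F₂ fun j hj => ?_
      rw [hF₂, Finset.mem_filter] at hj
      exact hj.2
    calc ∑ j ∈ F.filter (fun j => ¬ j = k), |w k (z j)|
        ≤ ∑ j ∈ F₁ ∪ F₂, |w k (z j)| :=
          Finset.sum_le_sum_of_subset_of_nonneg hsubset fun j _ _ => abs_nonneg _
      _ = ∑ j ∈ F₁, |w k (z j)| + ∑ j ∈ F₂, |w k (z j)| := Finset.sum_union hdisj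
      _ ≤ 3*δ := by linarith
  -- the operator
  have hTsum : ∀ h : C₀(ℕ, ℝ), Summable fun n => h n • z n := by
    intro h
    rw [summable_iff_vanishing]
    intro e he
    obtain ⟨r, hr, hball⟩ := Metric.mem_nhds_iff.mp he
    obtain ⟨N, hN⟩ := (Metric.tendsto_atTop.mp (c0_tendsto h)) (r/(2*C)) (by positivity)
    refine ⟨Finset.range N, fun t ht => ?_⟩
    apply hball
    rw [Metric.mem_ball, dist_zero_right]
    have hsmall : ∀ n ∈ t, |h n| ≤ r/(2*C) := by
      intro n hn
      have hnN : N ≤ n := by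
        by_contra hcon
        push_neg at hcon
        exact (Finset.disjoint_left.mp ht) hn (Finset.mem_range.mpr hcon)
      have := hN n hnN
      rw [Real.dist_eq, sub_zero] at this
      exact this.le
    have hbound : ∀ f : StrongDual ℝ X, ‖f (∑ n ∈ t, h n • z n)‖ ≤ (r/2) * ‖f‖ := by
      intro f
      rw [map_sum]
      calc ‖∑ n ∈ t, f (h n • z n)‖ ≤ ∑ n ∈ t, ‖f (h n • z n)‖ := norm_sum_le _ _
        _ = ∑ n ∈ t, |h n| * |f (z n)| := by
            refine Finset.sum_congr rfl fun n _ => ?_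
            rw [map_smul, smul_eq_mul, Real.norm_eq_abs, abs_mul]
        _ ≤ ∑ n ∈ t, (r/(2*C)) * |f (z n)| := by
            refine Finset.sum_le_sum fun n hn => ?_
            exact mul_le_mul_of_nonneg_right (hsmall n hn) (abs_nonneg _)
        _ = (r/(2*C)) * ∑ n ∈ t, |f (z n)| := by rw [Finset.mul_sum]
        _ ≤ (r/(2*C)) * (C * ‖f‖) := by
            refine mul_le_mul_of_nonneg_left ?_ (by positivity)
            exact le_trans (Summable.sum_le_tsum t (fun n _ => abs_nonneg _) (hzsum f)) (hzle f)
        _ = (r/2) * ‖f‖ := by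
            field_simp
    have := norm_le_dual_bound ℝ (∑ n ∈ t, h n • z n) (by positivity) hbound
    linarith
  set Tlin : C₀(ℕ, ℝ) →ₗ[ℝ] X :=
    { toFun := fun h => ∑' n, h n • z n
      map_add' := fun h1 h2 => by
        rw [show (fun n => (h1 + h2) n • z n) = fun n => h1 n • z n + h2 n • z n from
          funext fun n => by rw [ZeroAtInftyContinuousMap.coe_add]; simp [add_smul]]
        exact Summable.tsum_add (hTsum h1) (hTsum h2)
      map_smul' := fun r h => by
        simp only [RingHom.id_apply]
        rw [show (fun n => (r • h) n • z n) = fun n => r • (h n • z n) from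
          funext fun n => by
            rw [ZeroAtInftyContinuousMap.coe_smul]
            simp [smul_smul]]
        exact ((hTsum h).hasSum.const_smul r).tsum_eq } with hTlin
  have hTbound : ∀ h : C₀(ℕ, ℝ), ‖Tlin h‖ ≤ C * ‖h‖ := by
    intro h
    refine norm_le_dual_bound ℝ _ (by positivity) fun f => ?_
    have h1 : f (Tlin h) = ∑' n, f (h n • z n) :=
      ContinuousLinearMap.map_tsum f (hTsum h)
    have h2 : ∀ n, f (h n • z n) = h n * f (z n) := fun n => by
      rw [map_smul, smul_eq_mul]
    have hsummf : Summable fun n => h n * f (z n) := by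
      refine Summable.of_norm_bounded (g := fun n => ‖h‖ * |f (z n)|)
        ((hzsum f).mul_left ‖h‖) fun n => ?_
      rw [Real.norm_eq_abs, abs_mul]
      exact mul_le_mul_of_nonneg_right (c0_abs_apply_le h n) (abs_nonneg _)
    have h3 : ‖f (Tlin h)‖ ≤ ∑' n, ‖h n * f (z n)‖ := by
      rw [h1, tsum_congr h2]
      exact norm_tsum_le_tsum_norm (by simpa only [Real.norm_eq_abs] using hsummf.abs)
    have h4 : ∑' n, ‖h n * f (z n)‖ ≤ ∑' n, ‖h‖ * |f (z n)| := by
      refine Summable.tsum_le_tsum (fun n => ?_) (by simpa only [Real.norm_eq_abs] using hsummf.abs)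
        ((hzsum f).mul_left ‖h‖)
      rw [Real.norm_eq_abs, abs_mul]
      exact mul_le_mul_of_nonneg_right (c0_abs_apply_le h n) (abs_nonneg _)
    have h5 : ∑' n, ‖h‖ * |f (z n)| = ‖h‖ * ∑' n, |f (z n)| := tsum_mul_left
    calc ‖f (Tlin h)‖ ≤ ‖h‖ * ∑' n, |f (z n)| := by rw [← h5]; exact h3.trans h4
      _ ≤ ‖h‖ * (C * ‖f‖) := mul_le_mul_of_nonneg_left (hzle f) (norm_nonneg _)
      _ = C * ‖h‖ * ‖f‖ := by ring
  set T : C₀(ℕ, ℝ) →L[ℝ] X := Tlin.mkContinuous C hTbound with hT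
  refine ⟨T, ε/4, by linarith, fun h => ?_⟩
  by_cases hh0 : h = 0
  · rw [hh0]
    simp
  · have hnpos : 0 < ‖h‖ := norm_pos_iff.mpr hh0
    obtain ⟨k, hk⟩ := c0_argmax h hh0
    have hsum_fz : Summable fun j => h j * w k (z j) := by
      refine Summable.of_norm_bounded (g := fun j => ‖h‖ * |w k (z j)|)
        ((hwzsumm k).mul_left ‖h‖) fun j => ?_
      rw [Real.norm_eq_abs, abs_mul]
      exact mul_le_mul_of_nonneg_right (c0_abs_apply_le h j) (abs_nonneg _)
    have happly : w k (T h) = ∑' j, h j * w k (z j) := by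
      have h1 : w k (T h) = ∑' j, w k (h j • z j) :=
        ContinuousLinearMap.map_tsum (w k) (hTsum h)
      rw [h1]
      exact tsum_congr fun j => by rw [map_smul, smul_eq_mul]
    have hsplit := Summable.tsum_eq_add_tsum_ite hsum_fz k
    have hsummite2 : Summable fun j => (if j = k then 0 else |w k (z j)|) := by
      refine Summable.of_nonneg_of_le (fun j => ?_) (fun j => ?_) (hwzsumm k)
      · split
        · exact le_refl _
        · exact abs_nonneg _
      · split
        · exact abs_nonneg _
        · exact le_refl _
    have hterm_ite : ∀ j, ‖(if j = k then 0 else h j * w k (z j))‖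
        ≤ ‖h‖ * (if j = k then 0 else |w k (z j)|) := by
      intro j
      rw [Real.norm_eq_abs]
      split
      · simp
      · rw [abs_mul]
        exact mul_le_mul_of_nonneg_right (c0_abs_apply_le h j) (abs_nonneg _)
    have hsummnorm : Summable fun j => ‖(if j = k then 0 else h j * w k (z j))‖ :=
      Summable.of_nonneg_of_le (fun j => norm_nonneg _) hterm_ite (hsummite2.mul_left ‖h‖)
    have hite_bound : |∑' j, (if j = k then 0 else h j * w k (z j))| ≤ ‖h‖ * (3*δ) := by
      calc |∑' j, (if j = k then 0 else h j * w k (z j))|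
          ≤ ∑' j, ‖(if j = k then 0 else h j * w k (z j))‖ := by
            have := norm_tsum_le_tsum_norm hsummnorm
            simpa only [Real.norm_eq_abs] using this
        _ ≤ ∑' j, ‖h‖ * (if j = k then 0 else |w k (z j)|) :=
            Summable.tsum_le_tsum hterm_ite hsummnorm (hsummite2.mul_left ‖h‖)
        _ = ‖h‖ * ∑' j, (if j = k then 0 else |w k (z j)|) := tsum_mul_left
        _ ≤ ‖h‖ * (3*δ) := mul_le_mul_of_nonneg_left (hoff k) (norm_nonneg _)
    -- diagonal term
    have hdiag : |h k * w k (z k)| = ‖h‖ * w k (z k) := by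
      rw [abs_mul, hk]
      congr 1
      exact abs_of_nonneg (le_trans (by linarith) (hE1 k))
    have hdiag_ge : ‖h‖ * (3*ε/4) ≤ |h k * w k (z k)| := by
      rw [hdiag]
      exact mul_le_mul_of_nonneg_left (hE1 k) (norm_nonneg _)
    -- |a + b| ≥ |a| - |b|
    have habs_ge : |h k * w k (z k)| - |∑' j, (if j = k then 0 else h j * w k (z j))|
        ≤ |w k (T h)| := by
      rw [happly, hsplit]
      set aa := h k * w k (z k)
      set bb := ∑' j, (if j = k then 0 else h j * w k (z j))
      have h9 : |aa| ≤ |aa + bb| + |bb| := by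
        calc |aa| = |(aa + bb) + (-bb)| := by ring_nf
          _ ≤ |aa + bb| + |(-bb)| := abs_add_le _ _
          _ = |aa + bb| + |bb| := by rw [abs_neg]
      linarith
    have hwk_le : |w k (T h)| ≤ 2 * ‖T h‖ := by
      calc |w k (T h)| = ‖w k (T h)‖ := rfl
        _ ≤ ‖w k‖ * ‖T h‖ := (w k).le_opNorm _
        _ ≤ 2 * ‖T h‖ := mul_le_mul_of_nonneg_right (hwnorm k) (norm_nonneg _)
    have hfinal : ‖h‖ * (3*ε/4) - ‖h‖ * (3*δ) ≤ 2 * ‖T h‖ := by linarith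
    have hδval : δ = ε/16 := hδ
    nlinarith [hnpos.le, hε.le]

end BP

/-- for `1 < p ≤ ∞`, `X` has the `p`-Dunford-Pettis relatively compact
property iff `X` has the `(SR)_{1,p}` property and `X` contains no isomorphic copy of
`c₀`. -/
theorem stmt19 {p : ℝ≥0∞} (hp : 1 < p) {X : Type*} [NormedAddCommGroup X] [NormedSpace ℝ X]
    [CompleteSpace X] :
    (∀ x : ℕ → X, PRightNull p x → Tendsto (fun n => ‖x n‖) atTop (𝓝 0)) ↔
      ((∀ K : Set (StrongDual ℝ X), IsPRightSet 1 K → IsPRightSet p K) ∧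
        ¬ ∃ T : C₀(ℕ, ℝ) →L[ℝ] X, ∃ c > (0 : ℝ), ∀ f : C₀(ℕ, ℝ), c * ‖f‖ ≤ ‖T f‖) := by
  constructor
  · intro hDP
    constructor
    · intro K hK
      refine ⟨hK.1, fun x hx => ?_⟩
      have hxnorm := hDP x hx
      obtain ⟨M, hM⟩ := isBounded_iff_forall_norm_le.mp hK.1
      have h1 : ∀ n, 0 ≤ ⨆ f : K, |f.1 (x n)| :=
        fun n => Real.iSup_nonneg fun f => abs_nonneg _
      have h2 : ∀ n, (⨆ f : K, |f.1 (x n)|) ≤ (max M 0) * ‖x n‖ := by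
        intro n
        refine Real.iSup_le (fun f => ?_) (by positivity)
        calc |f.1 (x n)| = ‖f.1 (x n)‖ := rfl
          _ ≤ ‖f.1‖ * ‖x n‖ := f.1.le_opNorm _
          _ ≤ (max M 0) * ‖x n‖ :=
            mul_le_mul_of_nonneg_right (le_trans (hM f.1 f.2) (le_max_left _ _))
              (norm_nonneg _)
      have h3 : Tendsto (fun n => (max M 0) * ‖x n‖) atTop (𝓝 0) := by
        have := hxnorm.const_mul (max M 0)
        rwa [mul_zero] at this
      exact squeeze_zero h1 h2 h3
    · rintro ⟨T, c, hc, hT⟩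
      exact forward_no_c0 hp hDP T c hc hT
  · rintro ⟨hSR, hnoc0⟩ x hx
    have hball : IsPRightSet 1 (Metric.closedBall (0 : StrongDual ℝ X) 1) := by
      refine ⟨Metric.isBounded_closedBall, fun y hy => ?_⟩
      have hws : ∀ f : StrongDual ℝ X, Summable fun n => |f (y n)| := by
        have h1 := hy.1
        rw [WeaklyPSummable, if_neg (by simp : ¬ (1:ℝ≥0∞) = ∞)] at h1
        intro f
        have h2 := (h1 f).summable (by norm_num)
        refine h2.congr fun n => ?_
        rw [ENNReal.toReal_one, Real.rpow_one, Real.norm_eq_abs]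
      have hnorm : Tendsto (fun n => ‖y n‖) atTop (𝓝 0) := by
        by_contra hcon
        rw [Metric.tendsto_atTop] at hcon
        push_neg at hcon
        obtain ⟨ε, hε, hfr⟩ := hcon
        have hfr' : ∃ᶠ n in atTop, ε ≤ ‖y n‖ := by
          rw [frequently_atTop]
          intro N
          obtain ⟨n, hn1, hn2⟩ := hfr N
          refine ⟨n, hn1, ?_⟩
          rw [Real.dist_eq, sub_zero] at hn2
          calc ε ≤ abs ‖y n‖ := hn2
            _ = ‖y n‖ := abs_of_nonneg (norm_nonneg _)
        obtain ⟨φ, hφ, hφlow⟩ := extraction_of_frequently_atTop hfr'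
        have hwφ : ∀ f : StrongDual ℝ X, Summable fun n => |f (y (φ n))| :=
          fun f => (hws f).comp_injective hφ.injective
        exact hnoc0 (bp_embedding (fun n => y (φ n)) hwφ hε hφlow)
      have h1 : ∀ n, 0 ≤ ⨆ f : (Metric.closedBall (0 : StrongDual ℝ X) 1), |f.1 (y n)| :=
        fun n => Real.iSup_nonneg fun f => abs_nonneg _
      have h2 : ∀ n, (⨆ f : (Metric.closedBall (0 : StrongDual ℝ X) 1), |f.1 (y n)|) ≤ 1 * ‖y n‖ := by
        intro n
        refine Real.iSup_le (fun f => ?_) (by positivity)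
        have hf1 : ‖f.1‖ ≤ 1 := by
          have := f.2
          rwa [Metric.mem_closedBall, dist_zero_right] at this
        calc |f.1 (y n)| = ‖f.1 (y n)‖ := rfl
          _ ≤ ‖f.1‖ * ‖y n‖ := f.1.le_opNorm _
          _ ≤ 1 * ‖y n‖ := mul_le_mul_of_nonneg_right hf1 (norm_nonneg _)
      have h3 : Tendsto (fun n => (1:ℝ) * ‖y n‖) atTop (𝓝 0) := by
        have := hnorm.const_mul (1:ℝ)
        rwa [mul_zero] at this
      exact squeeze_zero h1 h2 h3
    have hsup := (hSR _ hball).2 x hx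
    have hbdd : ∀ n, BddAbove (Set.range fun f : (Metric.closedBall (0 : StrongDual ℝ X) 1) =>
        |f.1 (x n)|) := by
      intro n
      refine ⟨‖x n‖, ?_⟩
      rintro r ⟨f, rfl⟩
      have hf1 : ‖f.1‖ ≤ 1 := by
        have := f.2
        rwa [Metric.mem_closedBall, dist_zero_right] at this
      calc |f.1 (x n)| = ‖f.1 (x n)‖ := rfl
        _ ≤ ‖f.1‖ * ‖x n‖ := f.1.le_opNorm _
        _ ≤ 1 * ‖x n‖ := mul_le_mul_of_nonneg_right hf1 (norm_nonneg _)
        _ = ‖x n‖ := one_mul _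
    have hxle : ∀ n, ‖x n‖ ≤ ⨆ f : (Metric.closedBall (0 : StrongDual ℝ X) 1), |f.1 (x n)| := by
      intro n
      by_cases hx0 : x n = 0
      · rw [hx0, norm_zero]
        exact Real.iSup_nonneg fun f => abs_nonneg _
      · obtain ⟨f, hf1, hf2⟩ := exists_dual_vector ℝ (x n) (norm_ne_zero_iff.mpr hx0)
        have hfmem : f ∈ Metric.closedBall (0 : StrongDual ℝ X) 1 := by
          rw [Metric.mem_closedBall, dist_zero_right, hf1]
        calc ‖x n‖ = f (x n) := by exact_mod_cast hf2.symm
          _ ≤ |f (x n)| := le_abs_self _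
          _ ≤ ⨆ f : (Metric.closedBall (0 : StrongDual ℝ X) 1), |f.1 (x n)| :=
            le_ciSup (hbdd n) ⟨f, hfmem⟩
    exact squeeze_zero (fun n => norm_nonneg _) hxle hsup
end
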